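/- arXiv:2001.07599 — 9 statements merged into one kernel-verified Lean document; each statement's English description precedes it below -/
import Mathlib

section
/- Let n ≥ 1 and let H and G be symmetric n×n complex matrices such that Im H and Im G are positive definite. Let a, b ∈ ℝⁿ with (a, b) ≠ (0, 0). Then the (n+1)×(n+1) complex block matrix N = [[H + G, b − H·a], [(b − H·a)ᵀ, (H·a − b)·a]] — top-left block H + G of size n×n, top-right column vector b − H·a, bottom-left row (b − H·a)ᵀ, bottom-right scalar (H·a − b)·a — has nonzero determinant. (This is the invertibility of the Hessian ∇²Θ at an intersection point of a Gaussian beam and a Gaussian wave packet, proved in Step 7, Case 7c, of the quasimode construction.) -/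
/-!
If `N *ᵥ v = 0` with `v = x + i y`, then, `N` being symmetric,
`0 = v̄ᵀ N v = xᵀ N x + yᵀ N y`. For a real vector `w = (u, s)` the imaginary part of `wᵀ N w`
is `(u - s a)ᵀ (Im H) (u - s a) + uᵀ (Im G) u`, because all terms involving `b` are real.
Positivity of `Im H` and `Im G` therefore forces `u = 0` and `s a = 0` for both `x` and `y`,
so `v = (0, t)` with `t a = 0`. If `a = 0`, the first `n` rows of `N v = 0` read `t b = 0`,
and `b ≠ 0`; in either case `t = 0`.
-/

open Matrix Complex

namespace Matrix

section CommRing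

variable {m R : Type*} [Fintype m] [CommRing R]

theorem IsSymm.dotProduct_mulVec_comm {M : Matrix m m R} (hM : M.IsSymm) (v w : m → R) :
    v ⬝ᵥ M *ᵥ w = w ⬝ᵥ M *ᵥ v := by
  rw [dotProduct_mulVec, ← mulVec_transpose, hM.eq, dotProduct_comm]

def hessianBlock (H G : Matrix m m R) (a b : m → R) : Matrix (m ⊕ Unit) (m ⊕ Unit) R :=
  fromBlocks (H + G) (replicateCol Unit (b - H *ᵥ a)) (replicateRow Unit (b - H *ᵥ a))
    (of fun _ _ => (H *ᵥ a - b) ⬝ᵥ a)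

variable {H G : Matrix m m R} {a b : m → R}

theorem isSymm_hessianBlock (hH : H.IsSymm) (hG : G.IsSymm) : (hessianBlock H G a b).IsSymm :=
  (hH.add hG).fromBlocks (transpose_replicateCol _) (IsSymm.ext fun _ _ => rfl)

theorem dotProduct_hessianBlock_mulVec (hH : H.IsSymm) (w : m ⊕ Unit → R) :
    w ⬝ᵥ hessianBlock H G a b *ᵥ w =
      (w ∘ Sum.inl - w (Sum.inr ()) • a) ⬝ᵥ H *ᵥ (w ∘ Sum.inl - w (Sum.inr ()) • a) +
        (w ∘ Sum.inl) ⬝ᵥ G *ᵥ (w ∘ Sum.inl) +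
        w (Sum.inr ()) * (2 * (b ⬝ᵥ w ∘ Sum.inl) - w (Sum.inr ()) * (b ⬝ᵥ a)) := by
  set u := w ∘ Sum.inl
  set s := w (Sum.inr ())
  have hw : w = Sum.elim u (fun _ => s) := by ext (i | i) <;> rfl
  have hHu : a ⬝ᵥ H *ᵥ u = u ⬝ᵥ H *ᵥ a := hH.dotProduct_mulVec_comm a u
  have hcol : replicateCol Unit (b - H *ᵥ a) *ᵥ (fun _ => s) = s • (b - H *ᵥ a) := by
    ext; simp [mulVec, dotProduct, mul_comm]
  have hcorner : ((of fun _ _ => (H *ᵥ a - b) ⬝ᵥ a : Matrix Unit Unit R) *ᵥ fun _ => s) () =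
      (H *ᵥ a - b) ⬝ᵥ a * s := by
    simp [mulVec, dotProduct]
  have hconst (f : Unit → R) : (fun _ => s) ⬝ᵥ f = s * f () := by simp [dotProduct]
  rw [hw, hessianBlock, fromBlocks_mulVec, sumElim_dotProduct_sumElim, Sum.elim_comp_inl,
    Sum.elim_comp_inr, hcol, hconst, replicateRow_mulVec_eq_const, Pi.add_apply,
    Function.const_apply, hcorner]
  simp only [add_mulVec, mulVec_sub, mulVec_smul, dotProduct_add, dotProduct_sub, sub_dotProduct,
    smul_dotProduct, dotProduct_smul, smul_eq_mul, hHu, dotProduct_comm (H *ᵥ a),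
    dotProduct_comm u b]
  ring

theorem hessianBlock_mulVec_inl (v : m ⊕ Unit → R) (i : m) :
    (hessianBlock H G a b *ᵥ v) (Sum.inl i) =
      ((H + G) *ᵥ (v ∘ Sum.inl)) i + (b - H *ᵥ a) i * v (Sum.inr ()) := by
  simp [hessianBlock, mulVec, dotProduct]

end CommRing

section Complex

variable {ι κ : Type*} [Fintype ι] [Fintype κ]

theorem IsSymm.star_dotProduct_mulVec {N : Matrix ι ι ℂ} (hN : N.IsSymm) (v : ι → ℂ) :
    star v ⬝ᵥ N *ᵥ v = (ofReal ∘ re ∘ v) ⬝ᵥ N *ᵥ (ofReal ∘ re ∘ v) +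
      (ofReal ∘ im ∘ v) ⬝ᵥ N *ᵥ (ofReal ∘ im ∘ v) := by
  set x := ofReal ∘ re ∘ v
  set y := ofReal ∘ im ∘ v
  have hv : v = x + I • y := by ext i; apply Complex.ext <;> simp [x, y]
  have hsv : star v = x - I • y := by ext i; apply Complex.ext <;> simp [x, y]
  rw [hsv, hv]
  simp only [mulVec_add, mulVec_smul, dotProduct_add, sub_dotProduct, dotProduct_smul,
    smul_dotProduct, smul_eq_mul, hN.dotProduct_mulVec_comm y x]
  linear_combination (-(y ⬝ᵥ N *ᵥ y)) * I_mul_I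

theorem im_ofReal_dotProduct_mulVec (x : ι → ℝ) (M : Matrix ι κ ℂ) (y : κ → ℝ) :
    ((ofReal ∘ x) ⬝ᵥ M *ᵥ (ofReal ∘ y)).im = x ⬝ᵥ M.map im *ᵥ y := by
  simp [dotProduct, mulVec, im_sum, Finset.mul_sum, mul_left_comm]

variable {m : Type*} [Fintype m] {H G : Matrix m m ℂ} {a b : m → ℝ}

theorem im_ofReal_dotProduct_hessianBlock_mulVec (hH : H.IsSymm) (w : m ⊕ Unit → ℝ) :
    ((ofReal ∘ w) ⬝ᵥ hessianBlock H G (ofReal ∘ a) (ofReal ∘ b) *ᵥ (ofReal ∘ w)).im =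
      (w ∘ Sum.inl - w (Sum.inr ()) • a) ⬝ᵥ H.map im *ᵥ (w ∘ Sum.inl - w (Sum.inr ()) • a) +
        (w ∘ Sum.inl) ⬝ᵥ G.map im *ᵥ (w ∘ Sum.inl) := by
  have hcast (x y : m → ℝ) : (ofReal ∘ x) ⬝ᵥ (ofReal ∘ y) = ((x ⬝ᵥ y : ℝ) : ℂ) :=
    (ofRealHom.map_dotProduct x y).symm
  have hsub : (ofReal ∘ w) ∘ Sum.inl - (w (Sum.inr ()) : ℂ) • (ofReal ∘ a) =
      ofReal ∘ (w ∘ Sum.inl - w (Sum.inr ()) • a) := by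
    ext; simp
  rw [dotProduct_hessianBlock_mulVec hH, Function.comp_apply, hsub,
    Function.comp_assoc, hcast, hcast]
  simp only [add_im, im_ofReal_dotProduct_mulVec]
  rw [add_eq_left]
  norm_cast

theorem PosSemidef.dotProduct_mulVec_nonneg' {M : Matrix m m ℝ} (hM : M.PosSemidef) (x : m → ℝ) :
    0 ≤ x ⬝ᵥ M *ᵥ x := by
  simpa using hM.dotProduct_mulVec_nonneg x

theorem PosDef.eq_zero_of_dotProduct_mulVec_nonpos {M : Matrix m m ℝ} (hM : M.PosDef)
    {x : m → ℝ} (hx : x ⬝ᵥ M *ᵥ x ≤ 0) : x = 0 := by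
  by_contra h
  simpa using (hM.dotProduct_mulVec_pos h).trans_le hx

theorem im_ofReal_dotProduct_hessianBlock_mulVec_nonneg (hH : H.IsSymm)
    (hHpos : (H.map im).PosSemidef) (hGpos : (G.map im).PosSemidef) (w : m ⊕ Unit → ℝ) :
    0 ≤ ((ofReal ∘ w) ⬝ᵥ hessianBlock H G (ofReal ∘ a) (ofReal ∘ b) *ᵥ (ofReal ∘ w)).im := by
  rw [im_ofReal_dotProduct_hessianBlock_mulVec hH]
  exact add_nonneg (hHpos.dotProduct_mulVec_nonneg' _) (hGpos.dotProduct_mulVec_nonneg' _)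

theorem eq_zero_of_im_ofReal_dotProduct_hessianBlock_mulVec_nonpos (hH : H.IsSymm)
    (hHpos : (H.map im).PosDef) (hGpos : (G.map im).PosDef) {w : m ⊕ Unit → ℝ}
    (hw : ((ofReal ∘ w) ⬝ᵥ hessianBlock H G (ofReal ∘ a) (ofReal ∘ b) *ᵥ (ofReal ∘ w)).im ≤ 0) :
    w ∘ Sum.inl = 0 ∧ w (Sum.inr ()) • a = 0 := by
  rw [im_ofReal_dotProduct_hessianBlock_mulVec hH] at hw
  have hH0 := hHpos.posSemidef.dotProduct_mulVec_nonneg' (w ∘ Sum.inl - w (Sum.inr ()) • a)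
  have hG0 := hGpos.posSemidef.dotProduct_mulVec_nonneg' (w ∘ Sum.inl)
  have hinl := hGpos.eq_zero_of_dotProduct_mulVec_nonpos (by linarith)
  refine ⟨hinl, ?_⟩
  have hsub := hHpos.eq_zero_of_dotProduct_mulVec_nonpos (by linarith)
  rwa [hinl, zero_sub, neg_eq_zero] at hsub

theorem eq_zero_of_hessianBlock_mulVec_eq_zero (hH : H.IsSymm) (hG : G.IsSymm)
    (hHpos : (H.map im).PosDef) (hGpos : (G.map im).PosDef) (hab : ¬(a = 0 ∧ b = 0))
    {v : m ⊕ Unit → ℂ} (hv : hessianBlock H G (ofReal ∘ a) (ofReal ∘ b) *ᵥ v = 0) : v = 0 := by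
  set N := hessianBlock H G (ofReal ∘ a) (ofReal ∘ b)
  have hforms : ((ofReal ∘ re ∘ v) ⬝ᵥ N *ᵥ (ofReal ∘ re ∘ v)).im +
      ((ofReal ∘ im ∘ v) ⬝ᵥ N *ᵥ (ofReal ∘ im ∘ v)).im = 0 := by
    rw [← add_im, ← (isSymm_hessianBlock hH hG).star_dotProduct_mulVec, hv, dotProduct_zero,
      zero_im]
  have hre := im_ofReal_dotProduct_hessianBlock_mulVec_nonneg (a := a) (b := b) hH
    hHpos.posSemidef hGpos.posSemidef (re ∘ v)
  have him := im_ofReal_dotProduct_hessianBlock_mulVec_nonneg (a := a) (b := b) hH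
    hHpos.posSemidef hGpos.posSemidef (im ∘ v)
  obtain ⟨hre_inl, hre_a⟩ :=
    eq_zero_of_im_ofReal_dotProduct_hessianBlock_mulVec_nonpos hH hHpos hGpos (w := re ∘ v)
      (by linarith)
  obtain ⟨him_inl, him_a⟩ :=
    eq_zero_of_im_ofReal_dotProduct_hessianBlock_mulVec_nonpos hH hHpos hGpos (w := im ∘ v)
      (by linarith)
  have hinl : v ∘ Sum.inl = 0 :=
    funext fun i => Complex.ext (congrFun hre_inl i) (congrFun him_inl i)
  have hinr : v (Sum.inr ()) = 0 := by
    by_cases ha : a = 0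
    · obtain ⟨i, hi⟩ : ∃ i, b i ≠ 0 := by simpa [funext_iff] using fun hb => hab ⟨ha, hb⟩
      simpa [N, hessianBlock_mulVec_inl, hinl, ha, hi] using congrFun hv (Sum.inl i)
    · exact Complex.ext ((smul_eq_zero.mp hre_a).resolve_right ha)
        ((smul_eq_zero.mp him_a).resolve_right ha)
  exact funext fun | .inl i => congrFun hinl i | .inr () => hinr

end Complex

end Matrix

theorem hessian_block_det_ne_zero_general (n : ℕ)
    (H G : Matrix (Fin n) (Fin n) ℂ)
    (hHsymm : H.IsSymm) (hGsymm : G.IsSymm)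
    (hHpos : (Matrix.of fun i j => (H i j).im : Matrix (Fin n) (Fin n) ℝ).PosDef)
    (hGpos : (Matrix.of fun i j => (G i j).im : Matrix (Fin n) (Fin n) ℝ).PosDef)
    (a b : Fin n → ℝ) (hab : ¬ (a = 0 ∧ b = 0))
    (N : Matrix (Fin n ⊕ Unit) (Fin n ⊕ Unit) ℂ)
    (hN : N = Matrix.fromBlocks (H + G)
        (Matrix.of fun i (_ : Unit) =>
          (b i : ℂ) - H.mulVec (fun j => (a j : ℂ)) i)
        (Matrix.of fun (_ : Unit) j =>
          (b j : ℂ) - H.mulVec (fun k => (a k : ℂ)) j)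
        (Matrix.of fun (_ : Unit) (_ : Unit) =>
          (H.mulVec (fun j => (a j : ℂ)) - fun i => (b i : ℂ)) ⬝ᵥ (fun j => (a j : ℂ)))) :
    N.det ≠ 0 := by
  obtain rfl : N = hessianBlock H G (ofReal ∘ a) (ofReal ∘ b) := hN
  intro hdet
  obtain ⟨v, hv0, hv⟩ := exists_mulVec_eq_zero_iff.mpr hdet
  exact hv0 (eq_zero_of_hessianBlock_mulVec_eq_zero hHsymm hGsymm hHpos hGpos hab hv)

/-- Invertibility of the Hessian `∇²Θ` at an intersection point of a
Gaussian beam and a Gaussian wave packet (Step 7, Case 7c of the quasimode construction):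
for symmetric complex `n × n` matrices `H`, `G` with positive definite imaginary parts and
real vectors `a`, `b` not both zero, the block matrix
`N = [[H + G, b − H·a], [(b − H·a)ᵀ, (H·a − b)·a]]` has nonzero determinant. -/
theorem hessian_block_det_ne_zero (n : ℕ) (hn : 1 ≤ n)
    (H G : Matrix (Fin n) (Fin n) ℂ)
    (hHsymm : H.IsSymm) (hGsymm : G.IsSymm)
    (hHpos : (Matrix.of fun i j => (H i j).im : Matrix (Fin n) (Fin n) ℝ).PosDef)
    (hGpos : (Matrix.of fun i j => (G i j).im : Matrix (Fin n) (Fin n) ℝ).PosDef)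
    (a b : Fin n → ℝ) (hab : ¬ (a = 0 ∧ b = 0))
    (N : Matrix (Fin n ⊕ Unit) (Fin n ⊕ Unit) ℂ)
    (hN : N = Matrix.fromBlocks (H + G)
        (Matrix.of fun i (_ : Unit) =>
          (b i : ℂ) - H.mulVec (fun j => (a j : ℂ)) i)
        (Matrix.of fun (_ : Unit) j =>
          (b j : ℂ) - H.mulVec (fun k => (a k : ℂ)) j)
        (Matrix.of fun (_ : Unit) (_ : Unit) =>
          (H.mulVec (fun j => (a j : ℂ)) - fun i => (b i : ℂ)) ⬝ᵥ (fun j => (a j : ℂ)))) :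
    N.det ≠ 0 :=
  hessian_block_det_ne_zero_general n H G hHsymm hGsymm hHpos hGpos a b hab N hN
end

section
/- Let n ≥ 1, let B, C, D : ℝ → Mₙ(ℝ), and let H : ℝ → Mₙ(ℂ) be differentiable and satisfy the matrix Riccati equation H′(s) + H(s)C(s)H(s) + B(s)H(s) + H(s)B(s)ᵀ + D(s) = 0 for all s. Let x, ξ : ℝ → ℝⁿ be twice differentiable with x″(s) = B(s)ᵀ x′(s) + C(s) ξ′(s) and ξ″(s) = −D(s) x′(s) − B(s) ξ′(s) for all s. Define ρ(s) = H(s)·x′(s) − ξ′(s) ∈ ℂⁿ. Then ρ is differentiable with ρ′(s) = −(H(s)C(s) + B(s))·ρ(s) for every s ∈ ℝ. -/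
/-!
Differentiating gives ρ′ = H′x′ + Hx″ − ξ″. Substituting the Riccati equation for H′ and the
equations of motion for x″ and ξ″, the terms HBᵀx′ and Dx′ cancel and the rest factors as
−(HC + B)(Hx′ − ξ′).
-/

open Matrix

theorem HasDerivAt.mulVec_of_entries {𝕜 𝔸 m n : Type*} [NontriviallyNormedField 𝕜]
    [NormedRing 𝔸] [NormedAlgebra 𝕜 𝔸] [Fintype n]
    {M : 𝕜 → Matrix m n 𝔸} {M' : Matrix m n 𝔸} {v : 𝕜 → n → 𝔸} {v' : n → 𝔸} {s : 𝕜}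
    (hM : ∀ i j, HasDerivAt (fun t => M t i j) (M' i j) s) (hv : HasDerivAt v v' s) :
    HasDerivAt (fun t => M t *ᵥ v t) (M' *ᵥ v s + M s *ᵥ v') s := by
  refine hasDerivAt_pi.2 fun i => ?_
  simpa only [mulVec, dotProduct, Pi.add_apply, ← Finset.sum_add_distrib] using
    HasDerivAt.fun_sum fun j _ => (hM i j).fun_mul (hasDerivAt_pi.1 hv j)

theorem HasDerivAt.ofReal_comp_pi {ι : Type*} [Fintype ι] {v : ℝ → ι → ℝ} {v' : ι → ℝ} {s : ℝ}
    (hv : HasDerivAt v v' s) : HasDerivAt (fun t i => (v t i : ℂ)) (fun i => (v' i : ℂ)) s :=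
  hasDerivAt_pi.2 fun i => (hasDerivAt_pi.1 hv i).ofReal_comp

theorem Matrix.map_ofReal_mulVec {m n : Type*} [Fintype n] (A : Matrix m n ℝ) (v : n → ℝ) :
    A.map Complex.ofReal *ᵥ (fun i => (v i : ℂ)) = fun i => ((A *ᵥ v) i : ℂ) :=
  funext fun i => (RingHom.map_mulVec Complex.ofRealHom A v i).symm

theorem Matrix.riccati_mulVec_identity {R n : Type*} [Ring R] [Fintype n]
    {H H' B C D : Matrix n n R} (hRic : H' + H * C * H + B * H + H * Bᵀ + D = 0) (v w : n → R) :
    H' *ᵥ v + H *ᵥ (Bᵀ *ᵥ v + C *ᵥ w) - (-(D *ᵥ v) - B *ᵥ w) = -((H * C + B) *ᵥ (H *ᵥ v - w)) := by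
  have hH' : H' = -(H * C * H) - B * H - H * Bᵀ - D := by
    linear_combination (norm := noncomm_ring) hRic
  simp only [hH', add_mulVec, sub_mulVec, neg_mulVec, mulVec_add, mulVec_sub, ← mulVec_mulVec]
  abel

theorem riccati_rho_derivative_general (n : ℕ)
    (B C D : ℝ → Matrix (Fin n) (Fin n) ℝ)
    (H H' : ℝ → Matrix (Fin n) (Fin n) ℂ)
    (hH : ∀ s, ∀ i j, HasDerivAt (fun t => H t i j) (H' s i j) s)
    (hRic : ∀ s, H' s + H s * (C s).map (Complex.ofReal) * H s
        + (B s).map (Complex.ofReal) * H s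
        + H s * ((B s).map (Complex.ofReal))ᵀ
        + (D s).map (Complex.ofReal) = 0)
    (x' ξ' x'' ξ'' : ℝ → Fin n → ℝ)
    (hx' : ∀ s, HasDerivAt x' (x'' s) s)
    (hξ' : ∀ s, HasDerivAt ξ' (ξ'' s) s)
    (hxeq : ∀ s, x'' s = (B s)ᵀ.mulVec (x' s) + (C s).mulVec (ξ' s))
    (hξeq : ∀ s, ξ'' s = -((D s).mulVec (x' s)) - (B s).mulVec (ξ' s))
    (ρ : ℝ → Fin n → ℂ)
    (hρ : ρ = fun s => (H s).mulVec (fun i => (x' s i : ℂ)) - fun i => (ξ' s i : ℂ)) :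
    ∀ s : ℝ, HasDerivAt ρ
      (-((H s * (C s).map (Complex.ofReal) + (B s).map (Complex.ofReal)).mulVec (ρ s))) s := by
  intro s
  subst hρ
  have hρ' := ((hx' s).ofReal_comp_pi.mulVec_of_entries (hH s)).fun_sub (hξ' s).ofReal_comp_pi
  have hx'' : (fun i => (x'' s i : ℂ)) = ((B s).map Complex.ofReal)ᵀ *ᵥ (fun i => (x' s i : ℂ))
      + (C s).map Complex.ofReal *ᵥ (fun i => (ξ' s i : ℂ)) := by
    rw [← transpose_map, map_ofReal_mulVec, map_ofReal_mulVec, hxeq s]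
    funext i
    simp
  have hξ'' : (fun i => (ξ'' s i : ℂ)) = -((D s).map Complex.ofReal *ᵥ (fun i => (x' s i : ℂ)))
      - (B s).map Complex.ofReal *ᵥ (fun i => (ξ' s i : ℂ)) := by
    rw [map_ofReal_mulVec, map_ofReal_mulVec, hξeq s]
    funext i
    simp
  rwa [hx'', hξ'', riccati_mulVec_identity (hRic s)] at hρ'

/-- If `H` solves the matrix Riccati equation
`H′ + HCH + BH + HBᵀ + D = 0`, and `x, ξ` solve `x″ = Bᵀx′ + Cξ′`,
`ξ″ = −Dx′ − Bξ′`, then `ρ(s) = H(s)·x′(s) − ξ′(s)` satisfies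
`ρ′(s) = −(H(s)C(s) + B(s))·ρ(s)`. -/
theorem riccati_rho_derivative (n : ℕ) (hn : 1 ≤ n)
    (B C D : ℝ → Matrix (Fin n) (Fin n) ℝ)
    (H H' : ℝ → Matrix (Fin n) (Fin n) ℂ)
    (hH : ∀ s, ∀ i j, HasDerivAt (fun t => H t i j) (H' s i j) s)
    (hRic : ∀ s, H' s + H s * (C s).map (Complex.ofReal) * H s
        + (B s).map (Complex.ofReal) * H s
        + H s * ((B s).map (Complex.ofReal))ᵀ
        + (D s).map (Complex.ofReal) = 0)
    (x ξ x' ξ' x'' ξ'' : ℝ → Fin n → ℝ)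
    (hx : ∀ s, HasDerivAt x (x' s) s)
    (hx' : ∀ s, HasDerivAt x' (x'' s) s)
    (hξ : ∀ s, HasDerivAt ξ (ξ' s) s)
    (hξ' : ∀ s, HasDerivAt ξ' (ξ'' s) s)
    (hxeq : ∀ s, x'' s = (B s)ᵀ.mulVec (x' s) + (C s).mulVec (ξ' s))
    (hξeq : ∀ s, ξ'' s = -((D s).mulVec (x' s)) - (B s).mulVec (ξ' s))
    (ρ : ℝ → Fin n → ℂ)
    (hρ : ρ = fun s => (H s).mulVec (fun i => (x' s i : ℂ)) - fun i => (ξ' s i : ℂ)) :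
    ∀ s : ℝ, HasDerivAt ρ
      (-((H s * (C s).map (Complex.ofReal) + (B s).map (Complex.ofReal)).mulVec (ρ s))) s :=
  riccati_rho_derivative_general n B C D H H' hH hRic x' ξ' x'' ξ'' hx' hξ' hxeq hξeq ρ hρ
end

section
/- Let n ≥ 1, let H be a symmetric n×n complex matrix, let a, b ∈ ℝⁿ, let v ∈ ℂⁿ and z ∈ ℂ. Let N be the (n+1)×(n+1) complex block matrix N = [[H, b − H·a], [(b − H·a)ᵀ, (H·a − b)·a]] and let ζ = (v, z) ∈ ℂⁿ⁺¹. Then the imaginary part of the quadratic form Σ_{k,l} conj(ζ_k) N_{k,l} ζ_l equals Σ_{i,j} (Im H)_{i,j} conj(v_i − a_i z)(v_j − a_j z); in particular, if Im H is positive definite and this imaginary part vanishes, then v = a·z (componentwise v_i = a_i z). (This is the key imaginary-part computation used to prove invertibility of the phase Hessians in the quasimode and boundary determination arguments.) -/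
/-!
Write `u = v - z a`. Since `a` and `b` are real, the quadratic form of `N` at `ζ = (v, z)`
differs from the form of `H` at `u` by a real number, so both have the same imaginary part.
For symmetric `H`, the imaginary part of `u* H u` is `u* (Im H) u`, and for a real matrix `M` the
quadratic form `u* M u` is `p ⬝ M p + q ⬝ M q` where `u = p + i q`, which vanishes only at `u = 0`
when `M` is positive definite.
-/

open Matrix Complex

section Bordered

variable {ι R : Type*} [Fintype ι] [CommRing R] [StarRing R]

def borderedMatrix (H : Matrix ι ι R) (α β : ι → R) : Matrix (ι ⊕ Unit) (ι ⊕ Unit) R :=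
  fromBlocks H (of fun i _ => (β - H *ᵥ α) i) (of fun _ j => (β - H *ᵥ α) j)
    (of fun _ _ => (H *ᵥ α - β) ⬝ᵥ α)

omit [StarRing R] in
theorem sumElim_unit_dotProduct (x y : ι → R) (s t : R) :
    Sum.elim x (fun _ : Unit => s) ⬝ᵥ Sum.elim y (fun _ => t) = x ⬝ᵥ y + s * t := by
  simp [dotProduct, Fintype.sum_sum_type]

omit [Fintype ι] in
theorem star_sumElim_unit (x : ι → R) (s : R) :
    star (Sum.elim x (fun _ : Unit => s)) = Sum.elim (star x) (fun _ => star s) := by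
  ext (i | i) <;> rfl

omit [StarRing R] in
theorem borderedMatrix_mulVec_sumElim (H : Matrix ι ι R) (α β v : ι → R) (z : R) :
    borderedMatrix H α β *ᵥ Sum.elim v (fun _ => z) =
      Sum.elim (H *ᵥ v + z • (β - H *ᵥ α))
        (fun _ => (β - H *ᵥ α) ⬝ᵥ v + ((H *ᵥ α - β) ⬝ᵥ α) * z) := by
  ext (i | i) <;> simp [borderedMatrix, mulVec, dotProduct, mul_comm]

theorem star_dotProduct_borderedMatrix_mulVec {H : Matrix ι ι R} (hH : H.IsSymm) {α : ι → R}
    (hα : star α = α) (β v : ι → R) (z : R) :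
    star (Sum.elim v fun _ => z) ⬝ᵥ borderedMatrix H α β *ᵥ Sum.elim v (fun _ => z) =
      star (v - z • α) ⬝ᵥ H *ᵥ (v - z • α) +
        (z * (star v ⬝ᵥ β) + star z * (β ⬝ᵥ v) - star z * z * (β ⬝ᵥ α)) := by
  have hsymm : α ⬝ᵥ H *ᵥ v = H *ᵥ α ⬝ᵥ v := by
    rw [dotProduct_mulVec, ← mulVec_transpose, hH]
  rw [borderedMatrix_mulVec_sumElim, star_sumElim_unit, sumElim_unit_dotProduct]
  simp only [star_sub, star_smul, hα, mulVec_sub, mulVec_smul, dotProduct_add, dotProduct_sub,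
    sub_dotProduct, dotProduct_smul, smul_dotProduct, smul_eq_mul, hsymm]
  rw [dotProduct_comm (star v) β, dotProduct_comm (H *ᵥ α) α]
  ring

theorem isSelfAdjoint_star_dotProduct_borderedMatrix_mulVec_sub {H : Matrix ι ι R}
    (hH : H.IsSymm) {α β : ι → R} (hα : star α = α) (hβ : star β = β) (v : ι → R) (z : R) :
    IsSelfAdjoint
      (star (Sum.elim v fun _ => z) ⬝ᵥ borderedMatrix H α β *ᵥ Sum.elim v (fun _ => z) -
        star (v - z • α) ⬝ᵥ H *ᵥ (v - z • α)) := by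
  rw [star_dotProduct_borderedMatrix_mulVec hH hα, add_sub_cancel_left, IsSelfAdjoint]
  simp only [star_sub, star_add, star_mul', star_star, ← star_dotProduct_star, hβ, hα]
  rw [dotProduct_comm α β]
  ring

theorem star_dotProduct_mulVec_eq_sum_sum (A : Matrix ι ι R) (x : ι → R) :
    star x ⬝ᵥ A *ᵥ x = ∑ i, ∑ j, star (x i) * A i j * x j := by
  simp only [dotProduct, mulVec, Finset.mul_sum, Pi.star_apply, mul_assoc]

end Bordered

section ComplexForms

variable {ι : Type*} [Fintype ι]

omit [Fintype ι] in
theorem isHermitian_map_ofReal {M : Matrix ι ι ℝ} (hM : M.IsSymm) :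
    (M.map ((↑) : ℝ → ℂ)).IsHermitian :=
  (isHermitian_iff_isSymm.mpr hM).map _ fun x => (conj_ofReal x).symm

theorem im_star_dotProduct_map_ofReal_mulVec_self {M : Matrix ι ι ℝ} (hM : M.IsSymm)
    (u : ι → ℂ) : (star u ⬝ᵥ M.map (↑) *ᵥ u).im = 0 :=
  (isHermitian_map_ofReal hM).im_star_dotProduct_mulVec_self u

theorem re_star_dotProduct_map_ofReal_mulVec_self (M : Matrix ι ι ℝ) (u : ι → ℂ) :
    (star u ⬝ᵥ M.map (↑) *ᵥ u).re =
      (fun i => (u i).re) ⬝ᵥ M *ᵥ (fun i => (u i).re) +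
        (fun i => (u i).im) ⬝ᵥ M *ᵥ (fun i => (u i).im) := by
  simp only [dotProduct, mulVec, re_sum, Finset.mul_sum, ← Finset.sum_add_distrib]
  refine Finset.sum_congr rfl fun i _ => Finset.sum_congr rfl fun j _ => ?_
  simp [mul_re, mul_im]

theorem Matrix.PosDef.eq_zero_of_re_star_dotProduct_map_ofReal_mulVec_self_eq_zero
    {M : Matrix ι ι ℝ} (hM : M.PosDef) {u : ι → ℂ} (h : (star u ⬝ᵥ M.map (↑) *ᵥ u).re = 0) :
    u = 0 := by
  have hform : ∀ x : ι → ℝ, x ⬝ᵥ M *ᵥ x = 0 → x = 0 := fun x hx => by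
    by_contra hne
    simpa [hx] using hM.dotProduct_mulVec_pos hne
  have hnonneg : ∀ x : ι → ℝ, 0 ≤ x ⬝ᵥ M *ᵥ x := fun x => by
    simpa using hM.posSemidef.dotProduct_mulVec_nonneg x
  rw [re_star_dotProduct_map_ofReal_mulVec_self] at h
  have hre_nonneg := hnonneg fun i => (u i).re
  have him_nonneg := hnonneg fun i => (u i).im
  have hre := hform (fun i => (u i).re) (by linarith)
  have him := hform (fun i => (u i).im) (by linarith)
  ext i
  exact Complex.ext (congrFun hre i) (congrFun him i)

omit [Fintype ι] in
theorem map_ofReal_re_add_I_smul_map_ofReal_im (H : Matrix ι ι ℂ) :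
    (H.map re).map (↑) + I • (H.map im).map (↑) = H := by
  ext i j
  simp only [Matrix.add_apply, map_apply, Matrix.smul_apply, smul_eq_mul]
  rw [mul_comm, re_add_im]

theorem im_star_dotProduct_mulVec_self_of_isSymm {H : Matrix ι ι ℂ} (hH : H.IsSymm)
    (u : ι → ℂ) : (star u ⬝ᵥ H *ᵥ u).im = (star u ⬝ᵥ (H.map im).map (↑) *ᵥ u).re := by
  conv_lhs => rw [← map_ofReal_re_add_I_smul_map_ofReal_im H]
  rw [add_mulVec, smul_mulVec, dotProduct_add, dotProduct_smul, add_im, smul_eq_mul, I_mul_im,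
    im_star_dotProduct_map_ofReal_mulVec_self (hH.map _), zero_add]

end ComplexForms

theorem imaginary_part_quadratic_form_general (n : ℕ)
    (H : Matrix (Fin n) (Fin n) ℂ) (hHsymm : H.IsSymm)
    (a b : Fin n → ℝ) (v : Fin n → ℂ) (z : ℂ)
    (w : Fin n → ℂ)
    (hw : w = fun i => (b i : ℂ) - H.mulVec (fun j => (a j : ℂ)) i)
    (N : Matrix (Fin n ⊕ Unit) (Fin n ⊕ Unit) ℂ)
    (hN : N = Matrix.fromBlocks H
        (Matrix.of fun i (_ : Unit) => w i)
        (Matrix.of fun (_ : Unit) j => w j)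
        (Matrix.of fun (_ : Unit) (_ : Unit) =>
          (H.mulVec (fun j => (a j : ℂ)) - fun i => (b i : ℂ)) ⬝ᵥ (fun j => (a j : ℂ))))
    (ζ : Fin n ⊕ Unit → ℂ) (hζ : ζ = Sum.elim v fun _ => z) :
    (((∑ k, ∑ l, (starRingEnd ℂ) (ζ k) * N k l * ζ l).im : ℂ) =
        ∑ i, ∑ j, ((H i j).im : ℂ) *
          (starRingEnd ℂ) (v i - (a i : ℂ) * z) * (v j - (a j : ℂ) * z)) ∧
      ((Matrix.of fun i j => (H i j).im : Matrix (Fin n) (Fin n) ℝ).PosDef →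
        (∑ k, ∑ l, (starRingEnd ℂ) (ζ k) * N k l * ζ l).im = 0 →
        ∀ i, v i = (a i : ℂ) * z) := by
  set α : Fin n → ℂ := fun j => (a j : ℂ)
  set β : Fin n → ℂ := fun j => (b j : ℂ)
  have hN' : N = borderedMatrix H α β := by rw [hN, hw]; rfl
  set u := v - z • α
  have hu : ∀ i, u i = v i - (a i : ℂ) * z := fun i => by simp [u, α, mul_comm]
  have hQ : (∑ k, ∑ l, (starRingEnd ℂ) (ζ k) * N k l * ζ l).im =
      (star u ⬝ᵥ (H.map im).map (↑) *ᵥ u).re := by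
    have hreal := isSelfAdjoint_star_dotProduct_borderedMatrix_mulVec_sub hHsymm
      (α := α) (β := β) (funext fun _ => conj_ofReal _) (funext fun _ => conj_ofReal _) v z
    calc (∑ k, ∑ l, (starRingEnd ℂ) (ζ k) * N k l * ζ l).im
        = (star ζ ⬝ᵥ N *ᵥ ζ).im := by
          simp only [star_dotProduct_mulVec_eq_sum_sum, starRingEnd_apply]
      _ = (star ζ ⬝ᵥ N *ᵥ ζ - star u ⬝ᵥ H *ᵥ u).im + (star u ⬝ᵥ H *ᵥ u).im := by
        rw [← add_im, sub_add_cancel]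
      _ = (star u ⬝ᵥ (H.map im).map (↑) *ᵥ u).re := by
        rw [hN', hζ, conj_eq_iff_im.mp hreal, zero_add,
          im_star_dotProduct_mulVec_self_of_isSymm hHsymm]
  refine ⟨?_, fun hpos him i => ?_⟩
  · rw [hQ, conj_eq_iff_re.mp (conj_eq_iff_im.mpr
      (im_star_dotProduct_map_ofReal_mulVec_self (hHsymm.map _) u)),
      star_dotProduct_mulVec_eq_sum_sum]
    simp only [hu, map_apply, starRingEnd_apply]
    exact Finset.sum_congr rfl fun i _ => Finset.sum_congr rfl fun j _ => by ring
  · have hu0 := hpos.eq_zero_of_re_star_dotProduct_map_ofReal_mulVec_self_eq_zero (hQ ▸ him)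
    exact sub_eq_zero.mp ((hu i).symm.trans (congrFun hu0 i))

/-- The key imaginary-part computation for the phase Hessians: for a
symmetric complex matrix `H`, real vectors `a, b`, `v ∈ ℂⁿ`, `z ∈ ℂ`, the imaginary part
of the quadratic form of the block matrix `N = [[H, b − H·a], [(b − H·a)ᵀ, (H·a − b)·a]]`
at `ζ = (v, z)` equals `Σᵢⱼ (Im H)ᵢⱼ conj(vᵢ − aᵢ z)(vⱼ − aⱼ z)`; in particular, if
`Im H` is positive definite and this imaginary part vanishes, then `v = a·z`. -/
theorem imaginary_part_quadratic_form (n : ℕ) (hn : 1 ≤ n)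
    (H : Matrix (Fin n) (Fin n) ℂ) (hHsymm : H.IsSymm)
    (a b : Fin n → ℝ) (v : Fin n → ℂ) (z : ℂ)
    (w : Fin n → ℂ)
    (hw : w = fun i => (b i : ℂ) - H.mulVec (fun j => (a j : ℂ)) i)
    (N : Matrix (Fin n ⊕ Unit) (Fin n ⊕ Unit) ℂ)
    (hN : N = Matrix.fromBlocks H
        (Matrix.of fun i (_ : Unit) => w i)
        (Matrix.of fun (_ : Unit) j => w j)
        (Matrix.of fun (_ : Unit) (_ : Unit) =>
          (H.mulVec (fun j => (a j : ℂ)) - fun i => (b i : ℂ)) ⬝ᵥ (fun j => (a j : ℂ))))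
    (ζ : Fin n ⊕ Unit → ℂ) (hζ : ζ = Sum.elim v fun _ => z) :
    (((∑ k, ∑ l, (starRingEnd ℂ) (ζ k) * N k l * ζ l).im : ℂ) =
        ∑ i, ∑ j, ((H i j).im : ℂ) *
          (starRingEnd ℂ) (v i - (a i : ℂ) * z) * (v j - (a j : ℂ) * z)) ∧
      ((Matrix.of fun i j => (H i j).im : Matrix (Fin n) (Fin n) ℝ).PosDef →
        (∑ k, ∑ l, (starRingEnd ℂ) (ζ k) * N k l * ζ l).im = 0 →
        ∀ i, v i = (a i : ℂ) * z) :=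
  imaginary_part_quadratic_form_general n H hHsymm a b v z w hw N hN ζ hζ
end

section
/- Let n ≥ 1 and let B, C : ℝ → Mₙ(ℝ) with C(s) symmetric for every s. Let R, I : ℝ → Mₙ(ℝ) with R(s) and I(s) symmetric and I(s) invertible for every s, and let I be differentiable and satisfy I′(s) + I(s)C(s)R(s) + R(s)C(s)I(s) + B(s)I(s) + I(s)B(s)ᵀ = 0 for all s. Let ρ : ℝ → ℂⁿ be differentiable with ρ′(s) = −((R(s) + i·I(s))C(s) + B(s))·ρ(s) for all s. Then the function s ↦ (I(s)⁻¹·ρ(s)) · conj(ρ(s)) = Σⱼ (I(s)⁻¹ρ(s))ⱼ · conj(ρ(s)ⱼ) is constant on ℝ. (This is the constancy of the quantity f(s) in Step 8 of the quasimode construction, which yields det M(s) = α₀ det(Im H(s)).) -/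
/-!
Write `J = I⁻¹` and `M = (R + iI)C + B`, so that the quantity is `f = (Jρ)·ρ̄` and `ρ' = -Mρ`.
The product rule gives `f' = ((J' - JM - MᴴJ)ρ)·ρ̄`. By the Riccati equation,
`J' = -J I' J = J(ICR + RCI + BI + IBᵀ)J = CRJ + JRC + JB + BᵀJ`, and this is exactly
`JM + MᴴJ`: since `I`, `R`, `C` are symmetric, `Mᴴ = C(R - iI) + Bᵀ`, and the imaginary terms
`iJIC = iC` and `-iCIJ = -iC` cancel. Hence `f' = 0`.
-/

open Matrix

theorem hasDerivAt_matrix_iff {𝕜 F m n : Type*} [NontriviallyNormedField 𝕜]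
    [NormedAddCommGroup F] [NormedSpace 𝕜 F] [Fintype m] [Fintype n]
    {A : 𝕜 → Matrix m n F} {A' : Matrix m n F} {x : 𝕜} :
    HasDerivAt A A' x ↔ ∀ i j, HasDerivAt (fun t => A t i j) (A' i j) x :=
  (hasDerivAt_pi (φ := fun t i j => A t i j) (φ' := fun i j => A' i j)).trans
    (forall_congr' fun _ => hasDerivAt_pi)

section ProductRules

variable {𝕜 𝔸 m n : Type*} [NontriviallyNormedField 𝕜] [NormedCommRing 𝔸] [NormedAlgebra 𝕜 𝔸]
  [Fintype n] {x : 𝕜}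

theorem HasDerivAt.dotProduct {u v : 𝕜 → n → 𝔸} {u' v' : n → 𝔸} (hu : HasDerivAt u u' x)
    (hv : HasDerivAt v v' x) :
    HasDerivAt (fun t => u t ⬝ᵥ v t) (u' ⬝ᵥ v x + u x ⬝ᵥ v') x := by
  simp only [_root_.dotProduct, ← Finset.sum_add_distrib]
  exact HasDerivAt.fun_sum fun i _ => (hasDerivAt_pi.1 hu i).mul (hasDerivAt_pi.1 hv i)

theorem HasDerivAt.mulVec {A : 𝕜 → Matrix m n 𝔸} {A' : Matrix m n 𝔸} {u : 𝕜 → n → 𝔸}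
    {u' : n → 𝔸} (hA : HasDerivAt A A' x) (hu : HasDerivAt u u' x) :
    HasDerivAt (fun t => A t *ᵥ u t) (A' *ᵥ u x + A x *ᵥ u') x :=
  hasDerivAt_pi.2 fun i => (hasDerivAt_pi.1 hA i).dotProduct hu

end ProductRules

theorem HasDerivAt.matrix_inv {𝕜 ι : Type*} [NontriviallyNormedField 𝕜] [CompleteSpace 𝕜]
    [Fintype ι] [DecidableEq ι] {A : 𝕜 → Matrix ι ι 𝕜} {A' : Matrix ι ι 𝕜} {x : 𝕜}
    (hA : HasDerivAt A A' x) (hx : IsUnit (A x)) :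
    HasDerivAt (fun t => (A t)⁻¹) (-((A x)⁻¹ * A' * (A x)⁻¹)) x := by
  -- Any submultiplicative norm will do; the `L∞` operator norm induces the product topology,
  -- so `hA` remains valid for this normed-ring structure.
  let := Matrix.linftyOpNormedRing (n := ι) (α := 𝕜)
  let := Matrix.linftyOpNormedAlgebra (n := ι) (α := 𝕜) (R := 𝕜)
  have : @CompleteSpace (Matrix ι ι 𝕜) PseudoMetricSpace.toUniformSpace :=
    FiniteDimensional.complete 𝕜 _
  have hinv := (hasFDerivAt_ringInverse (𝕜 := 𝕜) hx.unit).comp_hasDerivAt x hA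
  simp only [Function.comp_def, ← nonsing_inv_eq_ringInverse, ← Ring.inverse_unit,
    IsUnit.unit_spec] at hinv
  exact hinv

theorem HasDerivAt.matrix_map_ofReal {m n : Type*} [Fintype m] [Fintype n]
    {A : ℝ → Matrix m n ℝ} {A' : Matrix m n ℝ} {x : ℝ} (hA : HasDerivAt A A' x) :
    HasDerivAt (fun t => (A t).map Complex.ofReal) (A'.map Complex.ofReal) x :=
  hasDerivAt_matrix_iff.2 fun i j => (hasDerivAt_matrix_iff.1 hA i j).ofReal_comp

theorem Matrix.transpose_map_ofReal {m n : Type*} (A : Matrix m n ℝ) :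
    Aᵀ.map Complex.ofReal = (A.map Complex.ofReal)ᴴ := by
  rw [← conjTranspose_eq_transpose_of_trivial,
    conjTranspose_map _ fun r => (Complex.conj_ofReal r).symm]

theorem Matrix.IsSymm.isHermitian_map_ofReal {n : Type*} {A : Matrix n n ℝ} (hA : A.IsSymm) :
    (A.map Complex.ofReal).IsHermitian := by
  rw [IsHermitian, ← transpose_map_ofReal, hA.eq]

theorem mulVec_dotProduct_star_eq_of_lyapunov {ι 𝕜 : Type*} [Fintype ι] [RCLike 𝕜]
    {J J' M : ℝ → Matrix ι ι 𝕜} {ρ : ℝ → ι → 𝕜} (hJ : ∀ s, HasDerivAt J (J' s) s)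
    (hρ : ∀ s, HasDerivAt ρ (-(M s *ᵥ ρ s)) s) (hJ' : ∀ s, J' s = J s * M s + (M s)ᴴ * J s)
    (s t : ℝ) :
    (J s *ᵥ ρ s) ⬝ᵥ star (ρ s) = (J t *ᵥ ρ t) ⬝ᵥ star (ρ t) := by
  have hderiv : ∀ s, HasDerivAt (fun t => (J t *ᵥ ρ t) ⬝ᵥ star (ρ t)) 0 s := by
    intro s
    convert ((hJ s).mulVec (hρ s)).dotProduct (hρ s).star using 1
    rw [hJ', star_neg, star_mulVec, dotProduct_neg, dotProduct_comm (J s *ᵥ ρ s),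
      ← dotProduct_mulVec, dotProduct_comm (star (ρ s)), mulVec_mulVec, add_mulVec, mulVec_neg,
      mulVec_mulVec, add_dotProduct, add_dotProduct, neg_dotProduct]
    abel
  exact is_const_of_deriv_eq_zero (fun u => (hderiv u).differentiableAt)
    (fun u => (hderiv u).deriv) s t

section Riccati

variable {ι : Type*} [Fintype ι] [DecidableEq ι]

theorem lyapunov_of_riccati {J K R C B : Matrix ι ι ℂ} (hJK : J * K = 1) (hKJ : K * J = 1)
    (hK : K.IsHermitian) (hR : R.IsHermitian) (hC : C.IsHermitian) :
    J * (K * C * R + R * C * K + B * K + K * Bᴴ) * J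
      = J * ((R + Complex.I • K) * C + B) + ((R + Complex.I • K) * C + B)ᴴ * J := by
  have hJK' : ∀ X : Matrix ι ι ℂ, J * (K * X) = X := fun X => by
    rw [← Matrix.mul_assoc, hJK, Matrix.one_mul]
  simp only [conjTranspose_add, conjTranspose_mul, conjTranspose_smul, hK.eq, hR.eq, hC.eq,
    Complex.star_def, Complex.conj_I, Matrix.mul_add, Matrix.add_mul, Matrix.mul_smul,
    Matrix.smul_mul, Matrix.mul_assoc, hJK', hKJ, Matrix.mul_one, neg_smul, Matrix.neg_mul]
  abel

theorem lyapunov_of_riccati_map_ofReal {K R C B : Matrix ι ι ℝ} (hK : IsUnit K)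
    (hKs : K.IsSymm) (hR : R.IsSymm) (hC : C.IsSymm) :
    (K⁻¹ * (K * C * R + R * C * K + B * K + K * Bᵀ) * K⁻¹).map Complex.ofReal
      = K⁻¹.map Complex.ofReal * ((R.map Complex.ofReal + Complex.I • K.map Complex.ofReal)
          * C.map Complex.ofReal + B.map Complex.ofReal)
        + ((R.map Complex.ofReal + Complex.I • K.map Complex.ofReal) * C.map Complex.ofReal
          + B.map Complex.ofReal)ᴴ * K⁻¹.map Complex.ofReal := by
  have hdet := (isUnit_iff_isUnit_det K).1 hK
  have hφ : ∀ X : Matrix ι ι ℝ, X.map Complex.ofReal = Complex.ofRealHom.mapMatrix X :=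
    fun _ => rfl
  have hinv_mul : K⁻¹.map Complex.ofReal * K.map Complex.ofReal = 1 := by
    rw [hφ, hφ, ← map_mul, nonsing_inv_mul K hdet, map_one]
  have hmul_inv : K.map Complex.ofReal * K⁻¹.map Complex.ofReal = 1 := by
    rw [hφ, hφ, ← map_mul, mul_nonsing_inv K hdet, map_one]
  rw [hφ]
  simp only [map_mul, map_add]
  simp only [← hφ, transpose_map_ofReal]
  exact lyapunov_of_riccati hinv_mul hmul_inv hKs.isHermitian_map_ofReal
    hR.isHermitian_map_ofReal hC.isHermitian_map_ofReal

end Riccati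

theorem riccati_quantity_constant_general (n : ℕ)
    (B C R : ℝ → Matrix (Fin n) (Fin n) ℝ)
    (hCsymm : ∀ s, (C s).IsSymm)
    (I I' : ℝ → Matrix (Fin n) (Fin n) ℝ)
    (hRsymm : ∀ s, (R s).IsSymm) (hIsymm : ∀ s, (I s).IsSymm)
    (hIinv : ∀ s, IsUnit (I s))
    (hI : ∀ s, ∀ i j, HasDerivAt (fun t => I t i j) (I' s i j) s)
    (hODE : ∀ s, I' s + I s * C s * R s + R s * C s * I s + B s * I s + I s * (B s)ᵀ = 0)
    (ρ : ℝ → Fin n → ℂ)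
    (hρ : ∀ s, HasDerivAt ρ
      (-(((((R s).map (Complex.ofReal)) + Complex.I • ((I s).map (Complex.ofReal)))
            * ((C s).map (Complex.ofReal))
          + ((B s).map (Complex.ofReal))).mulVec (ρ s))) s) :
    ∀ s t : ℝ,
      (((I s)⁻¹.map (Complex.ofReal)).mulVec (ρ s)) ⬝ᵥ (fun i => (starRingEnd ℂ) (ρ s i))
        = (((I t)⁻¹.map (Complex.ofReal)).mulVec (ρ t)) ⬝ᵥ (fun i => (starRingEnd ℂ) (ρ t i)) := by
  have hJ : ∀ s, HasDerivAt (fun t => (I t)⁻¹.map Complex.ofReal)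
      ((-((I s)⁻¹ * I' s * (I s)⁻¹)).map Complex.ofReal) s := fun s =>
    ((hasDerivAt_matrix_iff.2 (hI s)).matrix_inv (hIinv s)).matrix_map_ofReal
  refine mulVec_dotProduct_star_eq_of_lyapunov hJ hρ fun s => ?_
  have hI' : I' s = -(I s * C s * R s + R s * C s * I s + B s * I s + I s * (B s)ᵀ) :=
    eq_neg_of_add_eq_zero_left (by rw [← hODE s]; abel)
  rw [hI', mul_neg, neg_mul, neg_neg]
  exact lyapunov_of_riccati_map_ofReal (hIinv s) (hIsymm s) (hRsymm s) (hCsymm s)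

/-- Constancy of `f(s) = (I(s)⁻¹ρ(s))·conj(ρ(s))` (Step 8 of the
quasimode construction): if `I` is symmetric, invertible, and satisfies
`I′ + ICR + RCI + BI + IBᵀ = 0`, and `ρ′ = −((R + iI)C + B)ρ`, then
`s ↦ (I(s)⁻¹·ρ(s)) · conj(ρ(s))` is constant on `ℝ`. -/
theorem riccati_quantity_constant (n : ℕ) (hn : 1 ≤ n)
    (B C R : ℝ → Matrix (Fin n) (Fin n) ℝ)
    (hCsymm : ∀ s, (C s).IsSymm)
    (I I' : ℝ → Matrix (Fin n) (Fin n) ℝ)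
    (hRsymm : ∀ s, (R s).IsSymm) (hIsymm : ∀ s, (I s).IsSymm)
    (hIinv : ∀ s, IsUnit (I s))
    (hI : ∀ s, ∀ i j, HasDerivAt (fun t => I t i j) (I' s i j) s)
    (hODE : ∀ s, I' s + I s * C s * R s + R s * C s * I s + B s * I s + I s * (B s)ᵀ = 0)
    (ρ : ℝ → Fin n → ℂ)
    (hρ : ∀ s, HasDerivAt ρ
      (-(((((R s).map (Complex.ofReal)) + Complex.I • ((I s).map (Complex.ofReal)))
            * ((C s).map (Complex.ofReal))
          + ((B s).map (Complex.ofReal))).mulVec (ρ s))) s) :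
    ∀ s t : ℝ,
      (((I s)⁻¹.map (Complex.ofReal)).mulVec (ρ s)) ⬝ᵥ (fun i => (starRingEnd ℂ) (ρ s i))
        = (((I t)⁻¹.map (Complex.ofReal)).mulVec (ρ t)) ⬝ᵥ (fun i => (starRingEnd ℂ) (ρ t i)) :=
  riccati_quantity_constant_general n B C R hCsymm I I' hRsymm hIsymm hIinv hI hODE ρ hρ
end

section
/- Let H₁ and H₂ be complex Hilbert spaces, let V be a linear subspace of H₂, let W be a closed linear subspace of H₂, let A : V → H₁ be a linear map, and let C ≥ 0 be such that |⟨v, f⟩| ≤ C·‖f‖·‖A v‖ for all f ∈ W and all v ∈ V. Then there exists a continuous linear operator E : W → H₁ with operator norm ‖E‖ ≤ C such that ⟨A v, E f⟩ = ⟨v, f⟩ for all f ∈ W and all v ∈ V. (This is the construction of the bounded solution operator E_s in Proposition 2.1(d).) -/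
/-!
Let `K` be the closure of the range of `A`. The hypothesis makes `A v ↦ (f ↦ ⟨f, v⟩)` a
well-defined map of norm at most `C` from the range of `A` to the conjugate-linear functionals
on `W`; it extends by continuity to the Hilbert space `K`. Flipping the arguments and applying
the Riesz representation theorem in `K` yields `E f ∈ K` with `⟨E f, A v⟩ = ⟨f, v⟩`.
-/

open InnerProductSpace

theorem exists_inner_apply_eq_of_denseRange {𝕜 K W V : Type*} [RCLike 𝕜]
    [NormedAddCommGroup K] [InnerProductSpace 𝕜 K] [CompleteSpace K]
    [NormedAddCommGroup W] [NormedSpace 𝕜 W] [AddCommGroup V] [Module 𝕜 V]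
    {e : V →ₗ[𝕜] K} (he : DenseRange e) {Ψ : V →ₗ[𝕜] W →L⋆[𝕜] 𝕜} {C : ℝ} (hC : 0 ≤ C)
    (hΨ : ∀ v, ‖Ψ v‖ ≤ C * ‖e v‖) :
    ∃ T : W →L[𝕜] K, ‖T‖ ≤ C ∧ ∀ w v, inner 𝕜 (T w) (e v) = Ψ v w := by
  set Φ : K →L[𝕜] W →L⋆[𝕜] 𝕜 := Ψ.extendOfNorm e
  set R := (toDual 𝕜 K).symm.toLinearIsometry.toContinuousLinearMap
  refine ⟨R.comp Φ.flip, ?_, fun w v => ?_⟩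
  · calc ‖R.comp Φ.flip‖ ≤ ‖R‖ * ‖Φ.flip‖ := R.opNorm_comp_le _
      _ ≤ 1 * ‖Φ‖ := by
        rw [Φ.opNorm_flip]; gcongr; exact LinearIsometry.norm_toContinuousLinearMap_le _
      _ ≤ C := by rw [one_mul]; exact LinearMap.opNorm_extendOfNorm_le he hC hΨ
  · change inner 𝕜 ((toDual 𝕜 K).symm (Φ.flip w)) (e v) = _
    rw [toDual_symm_apply, ContinuousLinearMap.flip_apply,
      LinearMap.extendOfNorm_eq he ⟨C, hΨ⟩]

theorem LinearMap.denseRange_codRestrict_topologicalClosure {𝕜 M E : Type*} [Ring 𝕜]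
    [AddCommGroup M] [Module 𝕜 M] [AddCommGroup E] [Module 𝕜 E] [TopologicalSpace E]
    [IsTopologicalAddGroup E] [ContinuousConstSMul 𝕜 E] (A : M →ₗ[𝕜] E) :
    DenseRange (A.codRestrict (LinearMap.range A).topologicalClosure
      fun v => (LinearMap.range A).le_topologicalClosure (LinearMap.mem_range_self A v)) := by
  refine Subtype.dense_iff.2 ?_
  rw [← Set.range_comp]
  exact (Submodule.topologicalClosure_coe _).subset

theorem bounded_solution_operator_general {H₁ H₂ : Type*}
    [NormedAddCommGroup H₁] [InnerProductSpace ℂ H₁] [CompleteSpace H₁]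
    [NormedAddCommGroup H₂] [InnerProductSpace ℂ H₂]
    (V W : Submodule ℂ H₂)
    (A : V →ₗ[ℂ] H₁) (C : ℝ) (hC : 0 ≤ C)
    (h : ∀ f : W, ∀ v : V, ‖(inner ℂ ((v : H₂)) ((f : H₂)) : ℂ)‖ ≤ C * ‖(f : H₂)‖ * ‖A v‖) :
    ∃ E : W →L[ℂ] H₁, ‖E‖ ≤ C ∧
      ∀ (f : W) (v : V), (inner ℂ (A v) (E f) : ℂ) = inner ℂ ((v : H₂)) ((f : H₂)) := by
  set K := (LinearMap.range A).topologicalClosure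
  let Ψ : V →ₗ[ℂ] W →L⋆[ℂ] ℂ :=
    (ContinuousLinearMap.precomp ℂ W.subtypeL ∘L (innerSL ℂ).flip ∘L V.subtypeL).toLinearMap
  have hΨ : ∀ v, ‖Ψ v‖ ≤ C * ‖A v‖ := fun v =>
    (Ψ v).opNorm_le_bound (by positivity) fun f => by
      simpa [Ψ, norm_inner_symm, mul_right_comm] using h f v
  obtain ⟨T, hT, hTΨ⟩ :=
    exists_inner_apply_eq_of_denseRange A.denseRange_codRestrict_topologicalClosure hC hΨ
  refine ⟨K.subtypeL ∘L T, (K.subtypeL.opNorm_comp_le T).trans ?_, fun f v => ?_⟩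
  · exact (mul_le_of_le_one_left (norm_nonneg _) (Submodule.norm_subtypeL_le K)).trans hT
  · simpa [Ψ, Submodule.coe_inner, inner_conj_symm] using congrArg (starRingEnd ℂ) (hTΨ f v)

/-- Construction of the bounded solution operator `E_s`
(Proposition 2.1(d)): if `V` is a subspace and `W` a closed subspace of the Hilbert
space `H₂`, `A : V → H₁` is linear and `|⟨v, f⟩| ≤ C‖f‖‖Av‖` for all `f ∈ W`, `v ∈ V`,
then there is a continuous linear `E : W → H₁` with `‖E‖ ≤ C` and
`⟨Av, Ef⟩ = ⟨v, f⟩` for all `f ∈ W`, `v ∈ V`. -/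
theorem bounded_solution_operator {H₁ H₂ : Type*}
    [NormedAddCommGroup H₁] [InnerProductSpace ℂ H₁] [CompleteSpace H₁]
    [NormedAddCommGroup H₂] [InnerProductSpace ℂ H₂] [CompleteSpace H₂]
    (V W : Submodule ℂ H₂) (hW : IsClosed (W : Set H₂))
    (A : V →ₗ[ℂ] H₁) (C : ℝ) (hC : 0 ≤ C)
    (h : ∀ f : W, ∀ v : V, ‖(inner ℂ ((v : H₂)) ((f : H₂)) : ℂ)‖ ≤ C * ‖(f : H₂)‖ * ‖A v‖) :
    ∃ E : W →L[ℂ] H₁, ‖E‖ ≤ C ∧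
      ∀ (f : W) (v : V), (inner ℂ (A v) (E f) : ℂ) = inner ℂ ((v : H₂)) ((f : H₂)) :=
  bounded_solution_operator_general V W A C hC h
end

section
/- Let X be a complex Hilbert space, let Y and Z be normed spaces over ℂ, let T : X → Y and K : X → Z be continuous linear operators with K compact, and let C > 0 satisfy ‖v‖ ≤ C·(‖T v‖ + ‖K v‖) for all v ∈ X. Then there exists C′ > 0 such that ‖v‖ ≤ C′·‖T v‖ for all v in the orthogonal complement of the kernel of T. (This is the improved a priori estimate (2.2) proved by the compactness–contradiction argument in Proposition 2.1(c).) -/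
/-!
If no such `C'` existed, there would be unit vectors `uₙ ⊥ ker T` with `T uₙ → 0`. By compactness
of `K` some subsequence has `K uₙ` convergent, and the a priori estimate then makes that
subsequence Cauchy. Its limit `w` is a unit vector in the closed subspace `(ker T)ᗮ` with
`T w = 0`, which is impossible.
-/

open Filter Topology

section

variable {𝕜 X Y Z : Type*} [RCLike 𝕜]
  [NormedAddCommGroup X] [NormedSpace 𝕜 X]
  [NormedAddCommGroup Y] [NormedSpace 𝕜 Y]
  [NormedAddCommGroup Z] [NormedSpace 𝕜 Z]

theorem exists_norm_eq_one_tendsto_zero_of_not_bounded_below (T : X →ₗ[𝕜] Y)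
    (S : Submodule 𝕜 X) (hT : ¬ ∃ C > (0 : ℝ), ∀ v ∈ S, ‖v‖ ≤ C * ‖T v‖) :
    ∃ u : ℕ → X, (∀ n, u n ∈ S ∧ ‖u n‖ = 1) ∧ Tendsto (fun n ↦ T (u n)) atTop (𝓝 0) := by
  push Not at hT
  choose v hvS hv using fun n : ℕ ↦ hT (n + 1) n.cast_add_one_pos
  have hv0 : ∀ n, v n ≠ 0 := fun n h0 ↦ by simpa [h0] using hv n
  refine ⟨fun n ↦ (‖v n‖⁻¹ : 𝕜) • v n,
    fun n ↦ ⟨S.smul_mem _ (hvS n), norm_smul_inv_norm (hv0 n)⟩, ?_⟩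
  refine squeeze_zero_norm (fun n ↦ ?_) tendsto_one_div_add_atTop_nhds_zero_nat
  have hpos : 0 < ‖v n‖ := norm_pos_iff.mpr (hv0 n)
  rw [map_smul, norm_smul, norm_inv, RCLike.norm_ofReal, abs_norm, inv_mul_le_iff₀ hpos,
    mul_one_div, le_div_iff₀ n.cast_add_one_pos]
  linarith [hv n]

theorem cauchySeq_of_norm_le_mul_add (T : X →L[𝕜] Y) (K : X →L[𝕜] Z) {C : ℝ}
    (h : ∀ v, ‖v‖ ≤ C * (‖T v‖ + ‖K v‖)) {u : ℕ → X}
    (hTu : CauchySeq (fun n ↦ T (u n))) (hKu : CauchySeq (fun n ↦ K (u n))) : CauchySeq u := by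
  -- The estimate makes `v ↦ (T v, K v)` antilipschitz, and such maps reflect Cauchy sequences.
  have hbound : ∀ v, ‖v‖ ≤ (2 * C.toNNReal : NNReal) * ‖T.prod K v‖ := fun v ↦ calc
    ‖v‖ ≤ C * (‖T v‖ + ‖K v‖) := h v
    _ ≤ C.toNNReal * (‖T v‖ + ‖K v‖) := by gcongr; exact C.le_coe_toNNReal
    _ ≤ C.toNNReal * (2 * max ‖T v‖ ‖K v‖) := by
      gcongr; linarith [le_max_left ‖T v‖ ‖K v‖, le_max_right ‖T v‖ ‖K v‖]
    _ = (2 * C.toNNReal : NNReal) * ‖T.prod K v‖ := by push_cast; rw [Prod.norm_def]; ring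
  have := ((T.prod K).antilipschitz_of_bound hbound).isUniformInducing
    (T.prod K).uniformContinuous
  exact this.cauchy_map_iff.mp (hTu.prodMk hKu)

theorem IsCompactOperator.exists_tendsto_subseq {K : X →L[𝕜] Z} (hK : IsCompactOperator K)
    {u : ℕ → X} {R : ℝ} (hu : ∀ n, ‖u n‖ ≤ R) :
    ∃ z, ∃ φ : ℕ → ℕ, StrictMono φ ∧ Tendsto (fun n ↦ K (u (φ n))) atTop (𝓝 z) := by
  obtain ⟨M, hM, hKM⟩ := hK.image_closedBall_subset_compact (f := (K : X →ₗ[𝕜] Z)) R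
  obtain ⟨z, -, φ, hφ, hz⟩ := hM.tendsto_subseq fun n ↦
    hKM ⟨u n, mem_closedBall_zero_iff.mpr (hu n), rfl⟩
  exact ⟨z, φ, hφ, hz⟩

theorem exists_norm_le_mul_norm_of_disjoint_ker [CompleteSpace X] (T : X →L[𝕜] Y)
    {K : X →L[𝕜] Z} (hK : IsCompactOperator K) {C : ℝ}
    (h : ∀ v, ‖v‖ ≤ C * (‖T v‖ + ‖K v‖)) {S : Submodule 𝕜 X} (hS : IsClosed (S : Set X))
    (hST : Disjoint S (LinearMap.ker (T : X →ₗ[𝕜] Y))) :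
    ∃ C' > (0 : ℝ), ∀ v ∈ S, ‖v‖ ≤ C' * ‖T v‖ := by
  by_contra hT
  obtain ⟨u, hu, hTu⟩ := exists_norm_eq_one_tendsto_zero_of_not_bounded_below (T : X →ₗ[𝕜] Y) S hT
  obtain ⟨z, φ, hφ, hKu⟩ := hK.exists_tendsto_subseq fun n ↦ (hu n).2.le
  have hTuφ : Tendsto (fun n ↦ T (u (φ n))) atTop (𝓝 0) := hTu.comp hφ.tendsto_atTop
  obtain ⟨w, hw⟩ := cauchySeq_tendsto_of_complete
    (cauchySeq_of_norm_le_mul_add T K h hTuφ.cauchySeq hKu.cauchySeq)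
  have hwS : w ∈ S := hS.mem_of_tendsto hw (Eventually.of_forall fun n ↦ (hu (φ n)).1)
  have hTw : T w = 0 := tendsto_nhds_unique ((T.continuous.tendsto w).comp hw) hTuφ
  have hw1 : ‖w‖ = 1 := tendsto_nhds_unique hw.norm (by simp only [(hu _).2, tendsto_const_nhds])
  exact one_ne_zero (hw1 ▸ norm_eq_zero.mpr (Submodule.disjoint_def.mp hST w hwS hTw))

end

theorem estimate_on_orthogonal_complement_general {X Y Z : Type*}
    [NormedAddCommGroup X] [InnerProductSpace ℂ X] [CompleteSpace X]
    [NormedAddCommGroup Y] [NormedSpace ℂ Y]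
    [NormedAddCommGroup Z] [NormedSpace ℂ Z]
    (T : X →L[ℂ] Y) (K : X →L[ℂ] Z) (hK : IsCompactOperator (⇑K))
    (C : ℝ)
    (h : ∀ v : X, ‖v‖ ≤ C * (‖T v‖ + ‖K v‖)) :
    ∃ C' > (0:ℝ), ∀ v ∈ (LinearMap.ker (T : X →ₗ[ℂ] Y))ᗮ, ‖v‖ ≤ C' * ‖T v‖ :=
  exists_norm_le_mul_norm_of_disjoint_ker T hK h (Submodule.isClosed_orthogonal _)
    (Submodule.orthogonal_disjoint _).symm

/-- The improved a priori estimate (2.2) of Proposition 2.1(c):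
if `T : X → Y` and `K : X → Z` are continuous linear, `K` is compact, and
`‖v‖ ≤ C(‖Tv‖ + ‖Kv‖)` for all `v`, then there is `C′ > 0` with `‖v‖ ≤ C′‖Tv‖`
for all `v` in the orthogonal complement of `ker T`. -/
theorem estimate_on_orthogonal_complement {X Y Z : Type*}
    [NormedAddCommGroup X] [InnerProductSpace ℂ X] [CompleteSpace X]
    [NormedAddCommGroup Y] [NormedSpace ℂ Y]
    [NormedAddCommGroup Z] [NormedSpace ℂ Z]
    (T : X →L[ℂ] Y) (K : X →L[ℂ] Z) (hK : IsCompactOperator (⇑K))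
    (C : ℝ) (hC : 0 < C)
    (h : ∀ v : X, ‖v‖ ≤ C * (‖T v‖ + ‖K v‖)) :
    ∃ C' > (0:ℝ), ∀ v ∈ (LinearMap.ker (T : X →ₗ[ℂ] Y))ᗮ, ‖v‖ ≤ C' * ‖T v‖ :=
  estimate_on_orthogonal_complement_general T K hK C h
end

section
/- Let n ≥ 2 and let H₁, H₂, H₃, H₄ be symmetric n×n complex matrices with Im Hⱼ positive definite for each j. Let a₁, a₂, a₃, a₄, b₁, b₂, b₃, b₄ ∈ ℝⁿ be such that a₁ and a₂ are linearly independent, a₃ = λ₃·a₁ and a₄ = λ₄·a₂ for some nonzero real numbers λ₃, λ₄. Let N be the (n+4)×(n+4) complex matrix with block form: top-left n×n block Σⱼ Hⱼ; top-right n×4 block whose j-th column is bⱼ − Hⱼ·aⱼ; bottom-left 4×n block the transpose of the top-right block; bottom-right 4×4 diagonal block with j-th diagonal entry (Hⱼ·aⱼ − bⱼ)·aⱼ. Then det N ≠ 0. (This is the invertibility of the Hessian ∇²ₓ,ₜΘ of the four-wave phase function in the proof of Theorem 1.7 on semilinear equations.) -/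
/-!
A complex symmetric matrix `N` with positive definite imaginary part is invertible: if `N v = 0`
then `0 = Im (v̄ᵀ N v) = v̄ᵀ (Im N) v`, which forces `v = 0`. Since the `aⱼ`, `bⱼ` are real,
`Im N` is the Gram matrix of the quadratic form `(x, t) ↦ ∑ⱼ (Im Hⱼ)[x - tⱼ aⱼ]` on `ℝⁿ × ℝ⁴`.
Each summand is positive semidefinite, and all vanish only if `x = tⱼ aⱼ` for every `j`;
independence of `a₁, a₂` gives `t₁ = t₂ = 0`, so `x = 0`, and then `t₃ = t₄ = 0` as `a₃, a₄ ≠ 0`.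
-/

open Matrix

namespace Matrix

theorem isSymm_sum {ι κ α : Type*} [AddCommMonoid α] {B : κ → Matrix ι ι α} (s : Finset κ)
    (hB : ∀ j ∈ s, (B j).IsSymm) : (∑ j ∈ s, B j).IsSymm := by
  simp only [IsSymm, transpose_sum]
  exact Finset.sum_congr rfl hB

variable {ι : Type*} [Fintype ι]

theorem star_dotProduct_map_ofReal_mulVec {B : Matrix ι ι ℝ} (hB : B.IsSymm) (w : ι → ℂ) :
    star w ⬝ᵥ (B.map Complex.ofReal *ᵥ w) =
      (((fun i => (w i).re) ⬝ᵥ (B *ᵥ fun i => (w i).re) +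
        (fun i => (w i).im) ⬝ᵥ (B *ᵥ fun i => (w i).im) : ℝ) : ℂ) := by
  set u := fun i => (w i).re
  set v := fun i => (w i).im
  have hterm : ∀ i k, star (w i) * (B.map Complex.ofReal i k * w k) =
      ⟨u i * (B i k * u k) + v i * (B i k * v k), u i * (B i k * v k) - v i * (B i k * u k)⟩ :=
    fun i k => by
      apply Complex.ext <;>
      simp only [map_apply, Complex.mul_re, Complex.mul_im, Complex.star_def, Complex.conj_re,
        Complex.conj_im, Complex.ofReal_re, Complex.ofReal_im, u, v] <;> ring
  have hcross : u ⬝ᵥ (B *ᵥ v) = v ⬝ᵥ (B *ᵥ u) := by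
    rw [dotProduct_mulVec, ← mulVec_transpose, hB.eq, dotProduct_comm]
  simp only [dotProduct, mulVec, Finset.mul_sum, Pi.star_apply, hterm] at hcross ⊢
  apply Complex.ext
  · simp only [Complex.re_sum, Complex.ofReal_re, Finset.sum_add_distrib]
  · simp only [Complex.im_sum, Complex.ofReal_im, Finset.sum_sub_distrib, hcross, sub_self]

theorem PosDef.re_star_dotProduct_map_ofReal_mulVec_pos {B : Matrix ι ι ℝ} (hB : B.PosDef)
    {w : ι → ℂ} (hw : w ≠ 0) : 0 < (star w ⬝ᵥ (B.map Complex.ofReal *ᵥ w)).re := by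
  rw [star_dotProduct_map_ofReal_mulVec (isHermitian_iff_isSymm.mp hB.isHermitian),
    Complex.ofReal_re]
  have hnonneg (u : ι → ℝ) : 0 ≤ u ⬝ᵥ (B *ᵥ u) := by
    simpa only [star_trivial] using hB.posSemidef.dotProduct_mulVec_nonneg u
  have hpos {u : ι → ℝ} (hu : u ≠ 0) : 0 < u ⬝ᵥ (B *ᵥ u) := by
    simpa only [star_trivial] using hB.dotProduct_mulVec_pos hu
  by_cases hre : (fun i => (w i).re) = 0
  · have him : (fun i => (w i).im) ≠ 0 := fun him =>
      hw (funext fun i => Complex.ext (congrFun hre i) (congrFun him i))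
    linarith [hnonneg fun i => (w i).re, hpos him]
  · linarith [hnonneg fun i => (w i).im, hpos hre]

theorem IsSymm.im_star_dotProduct_mulVec_pos {N : Matrix ι ι ℂ} (hN : N.IsSymm)
    (hIm : (N.map Complex.im).PosDef) {v : ι → ℂ} (hv : v ≠ 0) :
    0 < (star v ⬝ᵥ (N *ᵥ v)).im := by
  have hsplit : N = (N.map Complex.re).map Complex.ofReal +
      Complex.I • (N.map Complex.im).map Complex.ofReal := by
    ext i k
    simp only [add_apply, smul_apply, map_apply, smul_eq_mul]
    rw [mul_comm, Complex.re_add_im]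
  rw [hsplit, add_mulVec, smul_mulVec, dotProduct_add, dotProduct_smul, smul_eq_mul,
    star_dotProduct_map_ofReal_mulVec (hN.map Complex.re), Complex.add_im, Complex.ofReal_im,
    zero_add, Complex.mul_im, Complex.I_re, Complex.I_im, zero_mul, one_mul, zero_add]
  exact hIm.re_star_dotProduct_map_ofReal_mulVec_pos hv

theorem IsSymm.det_ne_zero_of_posDef_im [DecidableEq ι] {N : Matrix ι ι ℂ} (hN : N.IsSymm)
    (hIm : (N.map Complex.im).PosDef) : N.det ≠ 0 := by
  intro hdet
  obtain ⟨v, hv, hNv⟩ := exists_mulVec_eq_zero_iff.mpr hdet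
  simpa [hNv] using hN.im_star_dotProduct_mulVec_pos hIm hv

variable {m n : Type*} [Fintype n]

theorem im_mulVec_ofReal (H : Matrix m n ℂ) (a : n → ℝ) (i : m) :
    ((H *ᵥ fun k => (a k : ℂ)) i).im = (H.map Complex.im *ᵥ a) i := by
  simp [mulVec, dotProduct, Complex.im_sum]

theorem im_dotProduct_ofReal (z : n → ℂ) (a : n → ℝ) :
    (z ⬝ᵥ fun k => (a k : ℂ)).im = (fun k => (z k).im) ⬝ᵥ a := by
  simp [dotProduct, Complex.im_sum]

variable {κ : Type*} [Fintype m] [Fintype κ] [DecidableEq κ]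

/-- With `Bⱼ = Im Hⱼ` this is the imaginary part of the Hessian. -/
def shearSumForm (B : κ → Matrix m m ℝ) (a : κ → m → ℝ) : Matrix (m ⊕ κ) (m ⊕ κ) ℝ :=
  fromBlocks (∑ j, B j) (of fun i j => -(B j *ᵥ a j) i) (of fun j i => -(B j *ᵥ a j) i)
    (diagonal fun j => (B j *ᵥ a j) ⬝ᵥ a j)

theorem sumElim_dotProduct_shearSumForm_mulVec {B : κ → Matrix m m ℝ} (hB : ∀ j, (B j).IsSymm)
    (a : κ → m → ℝ) (x : m → ℝ) (t : κ → ℝ) :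
    Sum.elim x t ⬝ᵥ (shearSumForm B a *ᵥ Sum.elim x t) =
      ∑ j, (x - t j • a j) ⬝ᵥ (B j *ᵥ (x - t j • a j)) := by
  have hcol : (of fun i j => -(B j *ᵥ a j) i) *ᵥ t = -∑ j, t j • (B j *ᵥ a j) := by
    ext i
    simp [mulVec, dotProduct, Finset.sum_apply, mul_comm]
  have hrows : t ⬝ᵥ ((of fun j i => -(B j *ᵥ a j) i) *ᵥ x +
      (diagonal fun j => (B j *ᵥ a j) ⬝ᵥ a j) *ᵥ t) =
      ∑ j, (t j * t j * ((B j *ᵥ a j) ⬝ᵥ a j) - t j * ((B j *ᵥ a j) ⬝ᵥ x)) := by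
    rw [dotProduct]
    refine Finset.sum_congr rfl fun j _ => ?_
    rw [Pi.add_apply, mulVec_diagonal]
    change t j * ((-(B j *ᵥ a j)) ⬝ᵥ x + _) = _
    rw [neg_dotProduct]
    ring
  have hsymm (j : κ) : a j ⬝ᵥ (B j *ᵥ x) = (B j *ᵥ a j) ⬝ᵥ x := by
    rw [dotProduct_mulVec, ← mulVec_transpose, (hB j).eq, dotProduct_comm]
  rw [shearSumForm, fromBlocks_mulVec, Sum.elim_comp_inl, Sum.elim_comp_inr,
    sumElim_dotProduct_sumElim, sum_mulVec, hcol, hrows]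
  simp only [dotProduct_add, dotProduct_neg, dotProduct_sum, dotProduct_smul, smul_eq_mul,
    mulVec_sub, mulVec_smul, dotProduct_sub, sub_dotProduct, smul_dotProduct, hsymm,
    dotProduct_comm x (B _ *ᵥ a _), dotProduct_comm (a _) (B _ *ᵥ a _)]
  rw [← Finset.sum_neg_distrib, ← Finset.sum_add_distrib, ← Finset.sum_add_distrib]
  exact Finset.sum_congr rfl fun j _ => by ring

theorem isSymm_shearSumForm {B : κ → Matrix m m ℝ} (hB : ∀ j, (B j).IsSymm) (a : κ → m → ℝ) :
    (shearSumForm B a).IsSymm :=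
  IsSymm.fromBlocks (isSymm_sum _ fun j _ => hB j) rfl (isSymm_diagonal _)

theorem posDef_shearSumForm {B : κ → Matrix m m ℝ} (hB : ∀ j, (B j).PosDef) {a : κ → m → ℝ}
    (ha : ∀ (x : m → ℝ) (t : κ → ℝ), (∀ j, x = t j • a j) → x = 0 ∧ t = 0) :
    (shearSumForm B a).PosDef := by
  have hBsymm j : (B j).IsSymm := isHermitian_iff_isSymm.mp (hB j).isHermitian
  refine .of_dotProduct_mulVec_pos (isHermitian_iff_isSymm.mpr (isSymm_shearSumForm hBsymm a))
    fun v hv => ?_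
  rw [star_trivial, ← Sum.elim_comp_inl_inr v, sumElim_dotProduct_shearSumForm_mulVec hBsymm]
  obtain ⟨j, hj⟩ : ∃ j, v ∘ Sum.inl - (v ∘ Sum.inr) j • a j ≠ 0 := by
    by_contra! h
    obtain ⟨hx, ht⟩ := ha _ _ fun j => sub_eq_zero.mp (h j)
    exact hv (by rw [← Sum.elim_comp_inl_inr v, hx, ht]; ext (i | j) <;> rfl)
  refine Finset.sum_pos' (fun i _ => ?_) ⟨j, Finset.mem_univ j, ?_⟩
  · simpa only [star_trivial] using (hB i).posSemidef.dotProduct_mulVec_nonneg _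
  · simpa only [star_trivial] using (hB j).dotProduct_mulVec_pos hj

end Matrix

theorem LinearIndependent.eq_zero_of_forall_eq_smul {K E ι : Type*} [Field K] [AddCommGroup E]
    [Module K E] {a : ι → E} {i k : ι} (hik : LinearIndependent K ![a i, a k])
    (ha : ∀ j, a j ≠ 0) {x : E} {t : ι → K} (h : ∀ j, x = t j • a j) : x = 0 ∧ t = 0 := by
  obtain ⟨hti, -⟩ : t i = 0 ∧ -t k = 0 :=
    LinearIndependent.pair_iff.mp hik _ _ (by rw [neg_smul, ← sub_eq_add_neg, ← h, ← h, sub_self])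
  have hx : x = 0 := by rw [h i, hti, zero_smul]
  refine ⟨hx, funext fun j => ?_⟩
  have hj := h j
  rw [hx, eq_comm, smul_eq_zero] at hj
  exact hj.resolve_right (ha j)

theorem four_wave_hessian_det_ne_zero_general (n : ℕ)
    (H : Fin 4 → Matrix (Fin n) (Fin n) ℂ)
    (hHsymm : ∀ j, (H j).IsSymm)
    (hHpos : ∀ j, (Matrix.of fun i k => (H j i k).im : Matrix (Fin n) (Fin n) ℝ).PosDef)
    (a b : Fin 4 → Fin n → ℝ)
    (hindep : LinearIndependent ℝ ![a 0, a 1])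
    (lam₃ lam₄ : ℝ) (hlam₃ : lam₃ ≠ 0) (hlam₄ : lam₄ ≠ 0)
    (ha₂ : a 2 = lam₃ • a 0) (ha₃ : a 3 = lam₄ • a 1)
    (N : Matrix (Fin n ⊕ Fin 4) (Fin n ⊕ Fin 4) ℂ)
    (hN : N = Matrix.fromBlocks
        (∑ j : Fin 4, H j)
        (Matrix.of fun i (j : Fin 4) =>
          (b j i : ℂ) - (H j).mulVec (fun k => (a j k : ℂ)) i)
        (Matrix.of fun (j : Fin 4) i =>
          (b j i : ℂ) - (H j).mulVec (fun k => (a j k : ℂ)) i)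
        (Matrix.diagonal fun (j : Fin 4) =>
          ((H j).mulVec (fun k => (a j k : ℂ)) - fun i => (b j i : ℂ))
            ⬝ᵥ (fun k => (a j k : ℂ)))) :
    N.det ≠ 0 := by
  have hsymm : N.IsSymm := by
    rw [hN]
    exact .fromBlocks (isSymm_sum _ fun j _ => hHsymm j) rfl (isSymm_diagonal _)
  have hIm : N.map Complex.im = shearSumForm (fun j => (H j).map Complex.im) a := by
    have hsum : (∑ j, H j).map Complex.im = ∑ j, (H j).map Complex.im :=
      map_sum Complex.imAddGroupHom.mapMatrix H Finset.univ
    rw [hN, fromBlocks_map, shearSumForm, diagonal_map Complex.zero_im, hsum]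
    congr 1 <;> ext <;> simp [im_mulVec_ofReal, im_dotProduct_ofReal]
  refine hsymm.det_ne_zero_of_posDef_im ?_
  rw [hIm]
  have ha : ∀ j, a j ≠ 0 := by
    have ha₀ : a 0 ≠ 0 := by simpa using hindep.ne_zero 0
    have ha₁ : a 1 ≠ 0 := by simpa using hindep.ne_zero 1
    intro j
    fin_cases j <;> simp [ha₀, ha₁, ha₂, ha₃, hlam₃, hlam₄]
  exact posDef_shearSumForm hHpos fun x t h => hindep.eq_zero_of_forall_eq_smul ha h

/-- Invertibility of the Hessian `∇²ₓ,ₜΘ` of the four-wave phase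
function in the proof of Theorem 1.7 on semilinear equations: for symmetric `n × n`
complex matrices `H₁, …, H₄` with positive definite imaginary parts and real vectors
`a₁, …, a₄, b₁, …, b₄` with `a₁, a₂` linearly independent, `a₃ = λ₃a₁`, `a₄ = λ₄a₂`
(`λ₃, λ₄ ≠ 0`), the `(n+4) × (n+4)` block matrix `N` with top-left block `Σⱼ Hⱼ`,
top-right columns `bⱼ − Hⱼ·aⱼ`, bottom-left their transpose, and bottom-right the
diagonal matrix with entries `(Hⱼ·aⱼ − bⱼ)·aⱼ`, has nonzero determinant. -/
theorem four_wave_hessian_det_ne_zero (n : ℕ) (hn : 2 ≤ n)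
    (H : Fin 4 → Matrix (Fin n) (Fin n) ℂ)
    (hHsymm : ∀ j, (H j).IsSymm)
    (hHpos : ∀ j, (Matrix.of fun i k => (H j i k).im : Matrix (Fin n) (Fin n) ℝ).PosDef)
    (a b : Fin 4 → Fin n → ℝ)
    (hindep : LinearIndependent ℝ ![a 0, a 1])
    (lam₃ lam₄ : ℝ) (hlam₃ : lam₃ ≠ 0) (hlam₄ : lam₄ ≠ 0)
    (ha₂ : a 2 = lam₃ • a 0) (ha₃ : a 3 = lam₄ • a 1)
    (N : Matrix (Fin n ⊕ Fin 4) (Fin n ⊕ Fin 4) ℂ)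
    (hN : N = Matrix.fromBlocks
        (∑ j : Fin 4, H j)
        (Matrix.of fun i (j : Fin 4) =>
          (b j i : ℂ) - (H j).mulVec (fun k => (a j k : ℂ)) i)
        (Matrix.of fun (j : Fin 4) i =>
          (b j i : ℂ) - (H j).mulVec (fun k => (a j k : ℂ)) i)
        (Matrix.diagonal fun (j : Fin 4) =>
          ((H j).mulVec (fun k => (a j k : ℂ)) - fun i => (b j i : ℂ))
            ⬝ᵥ (fun k => (a j k : ℂ)))) :
    N.det ≠ 0 :=
  four_wave_hessian_det_ne_zero_general n H hHsymm hHpos a b hindep lam₃ lam₄ hlam₃ hlam₄ ha₂ ha₃ N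
    hN
end

section
/- Let X be a commutative complex Banach algebra (complete normed commutative ℂ-algebra with submultiplicative norm; a unit is not required). Let P, E : X → X be continuous linear operators with P(E f) = f for all f ∈ X. Let c₂, c₃, … ∈ X and M₀, δ₀ > 0 satisfy ‖c_j‖ ≤ j! · M₀ / δ₀^j for all j ≥ 2, and for ‖w‖ < δ₀ define a(w) = Σ_{j=2}^{∞} (1/j!) c_j w^j (the series converges absolutely). Then there exist δ > 0 and C > 0 such that for every v ∈ X with ‖v‖ < δ there exists u ∈ X with ‖u − v‖ ≤ C‖v‖² and P u + a(u) = P v. In particular, if P v = 0 then u solves P u + a(u) = 0. (This is the fixed-point solvability statement of Lemma 6.1, abstracted to the Banach algebra setting of H^s(M).) -/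
/-- `npow1 w k = w^(k+1)`: powers in a (possibly non-unital) multiplicative structure. -/
def npow1 {X : Type*} [Mul X] (w : X) : ℕ → X
  | 0 => w
  | k + 1 => w * npow1 w k

open Metric Set

/-!
Since `P ∘ E = id`, it suffices to solve `u + E a(u) = v`. The series `a` starts at order two,
so termwise estimates give `‖a w - a w'‖ ≤ K r ‖w - w'‖` whenever `‖w‖, ‖w'‖ ≤ r ≤ δ₀ / 4`.
For small `‖v‖` the map `u ↦ v - E a(u)` is then a `1/2`-contraction of the closed ball of
radius `O(‖v‖²)` about `v`, and Banach's fixed-point theorem produces `u`.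
-/

def HasQuadraticLipschitzBound {X Y : Type*} [NormedAddCommGroup X] [NormedAddCommGroup Y]
    (G : X → Y) (K r₀ : ℝ) : Prop :=
  ∀ r ≤ r₀, ∀ w w' : X, ‖w‖ ≤ r → ‖w'‖ ≤ r → ‖G w - G w'‖ ≤ K * r * ‖w - w'‖

namespace HasQuadraticLipschitzBound

variable {X Y : Type*} [NormedAddCommGroup X] [NormedAddCommGroup Y] {G : X → Y} {K r₀ : ℝ}

theorem mono (hG : HasQuadraticLipschitzBound G K r₀) {K' : ℝ} (hK : K ≤ K') :
    HasQuadraticLipschitzBound G K' r₀ := fun r hr w w' hw hw' =>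
  (hG r hr w w' hw hw').trans <| by
    have : 0 ≤ r := (norm_nonneg w).trans hw
    gcongr

theorem congr (hG : HasQuadraticLipschitzBound G K r₀) {G' : X → Y}
    (hG' : ∀ w, ‖w‖ ≤ r₀ → G' w = G w) : HasQuadraticLipschitzBound G' K r₀ :=
  fun r hr w w' hw hw' => by
    rw [hG' w (hw.trans hr), hG' w' (hw'.trans hr)]
    exact hG r hr w w' hw hw'

theorem clm_comp {𝕜 Z : Type*} [NontriviallyNormedField 𝕜] [NormedSpace 𝕜 Y]
    [NormedAddCommGroup Z] [NormedSpace 𝕜 Z] (hG : HasQuadraticLipschitzBound G K r₀)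
    (E : Y →L[𝕜] Z) : HasQuadraticLipschitzBound (fun w => E (G w)) (‖E‖ * K) r₀ :=
  fun r hr w w' hw hw' => by
    calc ‖E (G w) - E (G w')‖ ≤ ‖E‖ * ‖G w - G w'‖ := by rw [← map_sub]; exact E.le_opNorm _
      _ ≤ ‖E‖ * (K * r * ‖w - w'‖) := by gcongr; exact hG r hr w w' hw hw'
      _ = ‖E‖ * K * r * ‖w - w'‖ := by ring

theorem exists_add_eq [CompleteSpace X] {G : X → X} (hG : HasQuadraticLipschitzBound G K r₀)
    (hK : 0 < K) (hr₀ : 0 < r₀) (hG0 : G 0 = 0) :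
    ∃ δ > 0, ∃ C > 0, ∀ v : X, ‖v‖ < δ → ∃ u, ‖u - v‖ ≤ C * ‖v‖ ^ 2 ∧ u + G u = v := by
  refine ⟨min (r₀ / 2) (1 / (4 * K)), by positivity, 4 * K, by positivity, fun v hv => ?_⟩
  have hvr₀ : 2 * ‖v‖ ≤ r₀ := by linarith [hv.le.trans (min_le_left _ _)]
  have hKv : 4 * K * ‖v‖ ≤ 1 := by
    have := hv.le.trans (min_le_right _ _)
    rwa [le_div_iff₀ (by positivity), mul_comm] at this
  set ρ := 4 * K * ‖v‖ ^ 2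
  have hball : ∀ u ∈ closedBall v ρ, ‖u‖ ≤ 2 * ‖v‖ := by
    intro u hu
    have : ρ ≤ ‖v‖ := by nlinarith [norm_nonneg v]
    linarith [norm_le_norm_sub_add u v, mem_closedBall_iff_norm.mp hu]
  have hmaps : MapsTo (fun u => v - G u) (closedBall v ρ) (closedBall v ρ) := by
    intro u hu
    rw [mem_closedBall_iff_norm, sub_sub_cancel_left, norm_neg]
    calc ‖G u‖ = ‖G u - G 0‖ := by rw [hG0, sub_zero]
      _ ≤ K * (2 * ‖v‖) * ‖u - 0‖ := hG _ hvr₀ _ _ (hball u hu) (by simp)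
      _ ≤ K * (2 * ‖v‖) * (2 * ‖v‖) := by gcongr; simpa using hball u hu
      _ = ρ := by ring
  have hlip : LipschitzOnWith (1 / 2) (fun u => v - G u) (closedBall v ρ) := by
    refine LipschitzOnWith.of_dist_le_mul fun u hu u' hu' => ?_
    rw [dist_eq_norm, dist_eq_norm, sub_sub_sub_cancel_left, norm_sub_rev]
    calc ‖G u - G u'‖ ≤ K * (2 * ‖v‖) * ‖u - u'‖ := hG _ hvr₀ _ _ (hball u hu) (hball u' hu')
      _ ≤ ((1 / 2 : NNReal) : ℝ) * ‖u - u'‖ := by gcongr; norm_num; linarith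
  obtain ⟨u, hu, hfix, -⟩ := ContractingWith.exists_fixedPoint' isClosed_closedBall.isComplete
    hmaps ⟨by norm_num, hmaps.lipschitzOnWith_iff_restrict.mp hlip⟩
    (mem_closedBall_self (by positivity)) (edist_ne_top _ _)
  exact ⟨u, mem_closedBall_iff_norm.mp hu, eq_sub_iff_add_eq.mp hfix.eq.symm⟩

end HasQuadraticLipschitzBound

theorem add_two_mul_pow_le_two_mul_half_pow {x : ℝ} (hx₀ : 0 ≤ x) (hx : x ≤ 1 / 4) (k : ℕ) :
    ((k : ℝ) + 2) * x ^ k ≤ 2 * (1 / 2) ^ k := by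
  have hk : (k : ℝ) + 2 ≤ 2 ^ (k + 1) := by
    exact_mod_cast Nat.succ_le_of_lt (Nat.lt_two_pow_self (n := k + 1))
  calc ((k : ℝ) + 2) * x ^ k ≤ 2 ^ (k + 1) * (1 / 4) ^ k := by gcongr
    _ = 2 * (1 / 2) ^ k := by rw [pow_succ', mul_assoc, ← mul_pow]; norm_num

section NonUnital

variable {X : Type*} [NonUnitalNormedCommRing X]

@[simp]
theorem npow1_zero (k : ℕ) : npow1 (0 : X) k = 0 := by
  cases k <;> simp [npow1]

theorem norm_npow1_le (w : X) : ∀ k, ‖npow1 w k‖ ≤ ‖w‖ ^ (k + 1)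
  | 0 => by simp [npow1]
  | k + 1 =>
    calc ‖w * npow1 w k‖ ≤ ‖w‖ * ‖npow1 w k‖ := norm_mul_le _ _
      _ ≤ ‖w‖ * ‖w‖ ^ (k + 1) := by gcongr; exact norm_npow1_le w k
      _ = ‖w‖ ^ (k + 1 + 1) := by ring

theorem norm_npow1_sub_le {w w' : X} {r : ℝ} (hw : ‖w‖ ≤ r) (hw' : ‖w'‖ ≤ r) :
    ∀ k, ‖npow1 w k - npow1 w' k‖ ≤ ((k : ℝ) + 1) * r ^ k * ‖w - w'‖
  | 0 => by simp [npow1]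
  | k + 1 => by
    have hr : 0 ≤ r := (norm_nonneg w).trans hw
    have hd : npow1 w (k + 1) - npow1 w' (k + 1)
        = w * (npow1 w k - npow1 w' k) + (w - w') * npow1 w' k := by
      simp only [npow1, mul_sub, sub_mul]; abel
    calc ‖npow1 w (k + 1) - npow1 w' (k + 1)‖
        ≤ ‖w‖ * ‖npow1 w k - npow1 w' k‖ + ‖w - w'‖ * ‖npow1 w' k‖ := by
          rw [hd]; exact (norm_add_le _ _).trans (add_le_add (norm_mul_le _ _) (norm_mul_le _ _))
      _ ≤ r * (((k : ℝ) + 1) * r ^ k * ‖w - w'‖) + ‖w - w'‖ * r ^ (k + 1) := by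
          gcongr
          · exact norm_npow1_sub_le hw hw' k
          · exact (norm_npow1_le w' k).trans (by gcongr)
      _ = (((k + 1 : ℕ) : ℝ) + 1) * r ^ (k + 1) * ‖w - w'‖ := by push_cast; ring

variable [NormedSpace ℂ X]

/-- The term `c_j w^j / j!` of `a(w)` with `j = k + 2`. -/
noncomputable def seriesTerm (c : ℕ → X) (w : X) (k : ℕ) : X :=
  (((k + 2).factorial : ℂ))⁻¹ • (c (k + 2) * npow1 w (k + 1))

variable {c : ℕ → X} {M₀ δ₀ : ℝ}

theorem norm_seriesTerm_sub_le (hM₀ : 0 ≤ M₀) (hδ₀ : 0 < δ₀)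
    (hc : ∀ j : ℕ, 2 ≤ j → ‖c j‖ ≤ (j.factorial : ℝ) * M₀ / δ₀ ^ j)
    {r : ℝ} (hr : r ≤ δ₀ / 4) {w w' : X} (hw : ‖w‖ ≤ r) (hw' : ‖w'‖ ≤ r) (k : ℕ) :
    ‖seriesTerm c w k - seriesTerm c w' k‖ ≤ 2 * M₀ * r / δ₀ ^ 2 * ‖w - w'‖ * (1 / 2) ^ k := by
  have hr₀ : 0 ≤ r := (norm_nonneg w).trans hw
  have hfac : (0 : ℝ) < (k + 2).factorial := by exact_mod_cast (k + 2).factorial_pos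
  have hnorm : ‖(((k + 2).factorial : ℂ))⁻¹‖ = (((k + 2).factorial : ℝ))⁻¹ := by
    rw [norm_inv]; norm_cast
  have hgeo := add_two_mul_pow_le_two_mul_half_pow (x := r / δ₀) (by positivity)
    (by rw [div_le_iff₀ hδ₀]; linarith) k
  rw [seriesTerm, seriesTerm, ← smul_sub, ← mul_sub, norm_smul, hnorm]
  calc (((k + 2).factorial : ℝ))⁻¹ * ‖c (k + 2) * (npow1 w (k + 1) - npow1 w' (k + 1))‖
      ≤ (((k + 2).factorial : ℝ))⁻¹ * (((k + 2).factorial * M₀ / δ₀ ^ (k + 2))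
          * ((((k + 1 : ℕ) : ℝ) + 1) * r ^ (k + 1) * ‖w - w'‖)) := by
        gcongr
        refine (norm_mul_le _ _).trans (mul_le_mul (hc (k + 2) (by omega))
          (norm_npow1_sub_le hw hw' (k + 1)) (norm_nonneg _) (by positivity))
    _ = M₀ * r / δ₀ ^ 2 * ‖w - w'‖ * (((k : ℝ) + 2) * (r / δ₀) ^ k) := by
        rw [div_pow]; push_cast; field_simp; ring
    _ ≤ M₀ * r / δ₀ ^ 2 * ‖w - w'‖ * (2 * (1 / 2) ^ k) := by gcongr
    _ = 2 * M₀ * r / δ₀ ^ 2 * ‖w - w'‖ * (1 / 2) ^ k := by ring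

theorem summable_seriesTerm [CompleteSpace X] (hM₀ : 0 ≤ M₀) (hδ₀ : 0 < δ₀)
    (hc : ∀ j : ℕ, 2 ≤ j → ‖c j‖ ≤ (j.factorial : ℝ) * M₀ / δ₀ ^ j)
    {w : X} (hw : ‖w‖ ≤ δ₀ / 4) : Summable (seriesTerm c w) := by
  refine .of_norm_bounded (summable_geometric_two.mul_left (2 * M₀ * ‖w‖ / δ₀ ^ 2 * ‖w‖))
    fun k => ?_
  simpa [seriesTerm] using
    norm_seriesTerm_sub_le hM₀ hδ₀ hc hw le_rfl (w' := 0) (by simp) k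

theorem hasQuadraticLipschitzBound_tsum_seriesTerm [CompleteSpace X] (hM₀ : 0 ≤ M₀)
    (hδ₀ : 0 < δ₀)
    (hc : ∀ j : ℕ, 2 ≤ j → ‖c j‖ ≤ (j.factorial : ℝ) * M₀ / δ₀ ^ j) :
    HasQuadraticLipschitzBound (fun w => ∑' k, seriesTerm c w k) (4 * M₀ / δ₀ ^ 2) (δ₀ / 4) := by
  intro r hr w w' hw hw'
  have hbound := norm_seriesTerm_sub_le hM₀ hδ₀ hc hr hw hw'
  have hgeo := summable_geometric_two.mul_left (2 * M₀ * r / δ₀ ^ 2 * ‖w - w'‖)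
  have hnorm : Summable fun k => ‖seriesTerm c w k - seriesTerm c w' k‖ :=
    .of_nonneg_of_le (fun _ => norm_nonneg _) hbound hgeo
  rw [← (summable_seriesTerm hM₀ hδ₀ hc (hw.trans hr)).tsum_sub
    (summable_seriesTerm hM₀ hδ₀ hc (hw'.trans hr))]
  calc ‖∑' k, (seriesTerm c w k - seriesTerm c w' k)‖
      ≤ ∑' k, 2 * M₀ * r / δ₀ ^ 2 * ‖w - w'‖ * (1 / 2) ^ k :=
        (norm_tsum_le_tsum_norm hnorm).trans (hnorm.tsum_le_tsum hbound hgeo)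
    _ = 4 * M₀ / δ₀ ^ 2 * r * ‖w - w'‖ := by rw [tsum_mul_left, tsum_geometric_two]; ring

end NonUnital

theorem semilinear_fixed_point_solvability_general {X : Type*}
    [NonUnitalNormedCommRing X] [NormedSpace ℂ X]
    [CompleteSpace X]
    (P E : X →L[ℂ] X) (hPE : ∀ f : X, P (E f) = f)
    (c : ℕ → X) (M₀ δ₀ : ℝ) (hM₀ : 0 < M₀) (hδ₀ : 0 < δ₀)
    (hc : ∀ j : ℕ, 2 ≤ j → ‖c j‖ ≤ (j.factorial : ℝ) * M₀ / δ₀ ^ j)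
    (a : X → X)
    (ha : ∀ w : X, ‖w‖ < δ₀ →
      a w = ∑' k : ℕ, ((((k + 2).factorial : ℂ))⁻¹ • (c (k + 2) * npow1 w (k + 1)))) :
    ∃ δ > (0:ℝ), ∃ C > (0:ℝ), ∀ v : X, ‖v‖ < δ →
      ∃ u : X, ‖u - v‖ ≤ C * ‖v‖ ^ 2 ∧ P u + a u = P v ∧ (P v = 0 → P u + a u = 0) := by
  have ha' : ∀ w : X, ‖w‖ ≤ δ₀ / 4 → a w = ∑' k, seriesTerm c w k := fun w hw =>
    ha w (by linarith)
  have ha0 : a 0 = 0 := by simpa [seriesTerm] using ha' 0 (by simp; positivity)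
  have hEa : HasQuadraticLipschitzBound (fun w => E (a w)) ((‖E‖ + 1) * (4 * M₀ / δ₀ ^ 2))
      (δ₀ / 4) :=
    (((hasQuadraticLipschitzBound_tsum_seriesTerm hM₀.le hδ₀ hc).congr ha').clm_comp E).mono
      (by gcongr; linarith)
  obtain ⟨δ, hδ, C, hC, hsolve⟩ := hEa.exists_add_eq (by positivity) (by positivity) (by simp [ha0])
  refine ⟨δ, hδ, C, hC, fun v hv => ?_⟩
  obtain ⟨u, hu, huv⟩ := hsolve v hv
  have hPu : P u + a u = P v := by rw [← huv, map_add, hPE]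
  exact ⟨u, hu, hPu, hPu.trans⟩

/-- The fixed-point solvability statement of Lemma 6.1, abstracted to
the Banach-algebra setting of `H^s(M)`: if `P(Ef) = f` for all `f`, and
`a(w) = Σ_{j≥2} (1/j!) c_j wʲ` with `‖c_j‖ ≤ j!M₀/δ₀ʲ`, then there are `δ, C > 0`
such that for every `v` with `‖v‖ < δ` there is `u` with `‖u − v‖ ≤ C‖v‖²` and
`Pu + a(u) = Pv`; in particular, if `Pv = 0` then `Pu + a(u) = 0`. -/
theorem semilinear_fixed_point_solvability {X : Type*}
    [NonUnitalNormedCommRing X] [NormedSpace ℂ X]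
    [IsScalarTower ℂ X X] [SMulCommClass ℂ X X] [CompleteSpace X]
    (P E : X →L[ℂ] X) (hPE : ∀ f : X, P (E f) = f)
    (c : ℕ → X) (M₀ δ₀ : ℝ) (hM₀ : 0 < M₀) (hδ₀ : 0 < δ₀)
    (hc : ∀ j : ℕ, 2 ≤ j → ‖c j‖ ≤ (j.factorial : ℝ) * M₀ / δ₀ ^ j)
    (a : X → X)
    (ha : ∀ w : X, ‖w‖ < δ₀ →
      a w = ∑' k : ℕ, ((((k + 2).factorial : ℂ))⁻¹ • (c (k + 2) * npow1 w (k + 1)))) :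
    ∃ δ > (0:ℝ), ∃ C > (0:ℝ), ∀ v : X, ‖v‖ < δ →
      ∃ u : X, ‖u - v‖ ≤ C * ‖v‖ ^ 2 ∧ P u + a u = P v ∧ (P v = 0 → P u + a u = 0) :=
  semilinear_fixed_point_solvability_general P E hPE c M₀ δ₀ hM₀ hδ₀ hc a ha
end

section
/- Let n ≥ 1, T > 0, let x : [0, T] → ℝⁿ be continuous, and let Φ : ℝⁿ × ℝ → ℂ be twice continuously differentiable. Assume that for every t ∈ [0, T]: Im Φ(x(t), t) = 0, the gradient in the first variable ∇_x Im Φ(x(t), t) = 0, and the Hessian in the first variable ∇²_x Im Φ(x(t), t) is positive definite. Then there exist ε > 0 and c > 0 such that Im Φ(y, t) ≥ c · |y − x(t)|² whenever t ∈ [0, T] and |y − x(t)| ≤ ε, where |·| is the Euclidean norm. (This is the uniform Gaussian lower bound (3.15) for the imaginary part of the Gaussian-beam phase, proved in Step 5 of Theorem 3.1.) -/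
/-!
Along the compact curve `C = {(x t, t)}` the `y`-Hessian of `Im Φ` is positive on the unit sphere,
so by compactness of `C × sphere` and continuity it stays above some `m > 0` on a whole
neighbourhood `thickening δ C`. For `‖y - x t‖ ≤ δ / 2` the segment from `x t` to `y` lies in that
neighbourhood, and second-order Taylor along it, with value and gradient vanishing at `x t`, gives
`Im Φ(y, t) ≥ (m / 2) ‖y - x t‖²`.
-/

open Set Metric ContinuousLinearMap

theorem IsCompact.exists_pos_le_on_thickening_prod {X Y : Type*} [PseudoMetricSpace X]
    [PseudoMetricSpace Y] {K : Set X} {S : Set Y} (hK : IsCompact K) (hS : IsCompact S)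
    {f : X × Y → ℝ} (hf : Continuous f) (hpos : ∀ p ∈ K, ∀ u ∈ S, 0 < f (p, u)) :
    ∃ m > 0, ∃ δ > 0, ∀ p ∈ thickening δ K, ∀ u ∈ S, m ≤ f (p, u) := by
  obtain ⟨m, hm, hmf⟩ := (hK.prod hS).exists_forall_le' hf.continuousOn
    fun q hq => hpos q.1 hq.1 q.2 hq.2
  obtain ⟨δ, hδ, hsub⟩ := (hK.prod hS).exists_thickening_subset_open
    (isOpen_lt continuous_const hf) fun q hq => (half_lt_self hm).trans_le (hmf q hq)
  refine ⟨m / 2, half_pos hm, δ, hδ, fun p hp u hu => ?_⟩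
  obtain ⟨k, hk, hpk⟩ := mem_thickening_iff.1 hp
  have hpu : (p, u) ∈ thickening δ (K ×ˢ S) :=
    mem_thickening_iff.2 ⟨(k, u), ⟨hk, hu⟩, by simp [Prod.dist_eq, hpk]⟩
  exact (hsub hpu).le

theorem Convex.monotoneOn_of_hasDerivAt_nonneg {D : Set ℝ} (hD : Convex ℝ D) {f f' : ℝ → ℝ}
    (hf : ∀ s ∈ D, HasDerivAt f (f' s) s) (hf' : ∀ s ∈ D, 0 ≤ f' s) : MonotoneOn f D :=
  monotoneOn_of_hasDerivWithinAt_nonneg hD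
    (fun s hs => (hf s hs).continuousAt.continuousWithinAt)
    (fun s hs => (hf s (interior_subset hs)).hasDerivWithinAt)
    fun s hs => hf' s (interior_subset hs)

theorem add_deriv_add_half_le_of_le_deriv_deriv {g g' g'' : ℝ → ℝ} {a : ℝ}
    (hg : ∀ s ∈ Icc (0:ℝ) 1, HasDerivAt g (g' s) s)
    (hg' : ∀ s ∈ Icc (0:ℝ) 1, HasDerivAt g' (g'' s) s)
    (ha : ∀ s ∈ Icc (0:ℝ) 1, a ≤ g'' s) : g 0 + g' 0 + a / 2 ≤ g 1 := by
  have h01 : (0:ℝ) ∈ Icc 0 1 := left_mem_Icc.2 zero_le_one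
  have h11 : (1:ℝ) ∈ Icc 0 1 := right_mem_Icc.2 zero_le_one
  have hφ : MonotoneOn (fun s => g' s - a * s) (Icc 0 1) :=
    (convex_Icc 0 1).monotoneOn_of_hasDerivAt_nonneg
      (fun s hs => by simpa using (hg' s hs).fun_sub ((hasDerivAt_id' s).const_mul a))
      fun s hs => sub_nonneg.2 (ha s hs)
  have hψ : MonotoneOn (fun s => g s - g' 0 * s - a / 2 * s ^ 2) (Icc 0 1) :=
    (convex_Icc 0 1).monotoneOn_of_hasDerivAt_nonneg
      (f' := fun s => (g' s - a * s) - (g' 0 - a * 0))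
      (fun s hs => (((hg s hs).fun_sub ((hasDerivAt_id' s).const_mul (g' 0))).fun_sub
        ((hasDerivAt_pow 2 s).const_mul (a / 2))).congr_deriv (by ring))
      fun s hs => sub_nonneg.2 (hφ h01 hs hs.1)
  have := hψ h01 h11 zero_le_one
  simp only at this
  linarith

section PartialDerivatives

variable {E P G : Type*} [NormedAddCommGroup E] [NormedSpace ℝ E] [NormedAddCommGroup P]
  [NormedSpace ℝ P] [NormedAddCommGroup G] [NormedSpace ℝ G]

theorem fderiv_comp_prodMk_left_apply {F : E × P → G} {y : E} {t : P}
    (hF : DifferentiableAt ℝ F (y, t)) (v : E) :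
    fderiv ℝ (fun z => F (z, t)) y v = fderiv ℝ F (y, t) (v, 0) := by
  have h : HasFDerivAt (fun z => F (z, t)) ((fderiv ℝ F (y, t)).comp (inl ℝ E P)) y :=
    hF.hasFDerivAt.comp y (hasFDerivAt_prodMk_left y t)
  rw [h.fderiv]
  rfl

theorem fderiv_fderiv_comp_prodMk_left_apply {F : E × P → G} (hF : ContDiff ℝ 2 F)
    (y : E) (t : P) (v w : E) :
    fderiv ℝ (fun y' => fderiv ℝ (fun z => F (z, t)) y' v) y w
      = fderiv ℝ (fderiv ℝ F) (y, t) (w, 0) (v, 0) := by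
  have hF1 : Differentiable ℝ F := hF.differentiable (by norm_num)
  have hF2 : Differentiable ℝ (fderiv ℝ F) :=
    (hF.fderiv_right (m := 1) (by norm_num)).differentiable one_ne_zero
  simp_rw [fderiv_comp_prodMk_left_apply (hF1 _)]
  have h₁ : HasFDerivAt (fun y' => fderiv ℝ F (y', t))
      ((fderiv ℝ (fderiv ℝ F) (y, t)).comp (inl ℝ E P)) y :=
    (hF2 (y, t)).hasFDerivAt.comp y (hasFDerivAt_prodMk_left y t)
  have h : HasFDerivAt (fun y' => fderiv ℝ F (y', t) (v, 0)) _ y :=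
    (apply ℝ G ((v, 0) : E × P)).hasFDerivAt.comp y h₁
  rw [h.fderiv]
  rfl

noncomputable def fstHessian (F : E × P → ℝ) (p : E × P) (v : E) : ℝ :=
  fderiv ℝ (fderiv ℝ F) p (v, 0) (v, 0)

theorem fstHessian_smul (F : E × P → ℝ) (p : E × P) (a : ℝ) (v : E) :
    fstHessian F p (a • v) = a ^ 2 * fstHessian F p v := by
  have h : ((a • v, (0:P)) : E × P) = a • ((v, 0) : E × P) := by simp
  simp only [fstHessian, h, map_smul, smul_apply, smul_eq_mul]
  ring

theorem mul_sq_norm_le_fstHessian {F : E × P → ℝ} {p : E × P} {m : ℝ}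
    (hm : ∀ u ∈ sphere (0:E) 1, m ≤ fstHessian F p u) (v : E) :
    m * ‖v‖ ^ 2 ≤ fstHessian F p v := by
  rcases eq_or_ne v 0 with rfl | hv
  · simp [show fstHessian F p 0 = 0 by simpa using fstHessian_smul F p 0 0]
  · have hu : ‖v‖⁻¹ • v ∈ sphere (0:E) 1 := by
      simp [norm_smul, hv]
    have := hm _ hu
    rw [fstHessian_smul, inv_pow] at this
    have hv2 : 0 < ‖v‖ ^ 2 := by positivity
    rwa [le_inv_mul_iff₀ hv2, mul_comm] at this

theorem continuous_fstHessian {F : E × P → ℝ} (hF : ContDiff ℝ 2 F) :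
    Continuous fun q : (E × P) × E => fstHessian F q.1 q.2 := by
  have h : Continuous (fderiv ℝ (fderiv ℝ F)) :=
    (hF.fderiv_right (m := 1) (by norm_num)).continuous_fderiv one_ne_zero
  have hv : Continuous fun q : (E × P) × E => ((q.2, (0:P)) : E × P) := by fun_prop
  exact ((h.comp continuous_fst).clm_apply hv).clm_apply hv

theorem add_fderiv_add_half_le_of_le_fstHessian {F : E × P → ℝ} (hF : ContDiff ℝ 2 F) {c v : E} {t : P}
    {a : ℝ} (ha : ∀ s ∈ Icc (0:ℝ) 1, a ≤ fstHessian F (c + s • v, t) v) :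
    F (c, t) + fderiv ℝ F (c, t) (v, 0) + a / 2 ≤ F (c + v, t) := by
  have hF1 : Differentiable ℝ F := hF.differentiable (by norm_num)
  have hF2 : Differentiable ℝ (fderiv ℝ F) :=
    (hF.fderiv_right (m := 1) (by norm_num)).differentiable one_ne_zero
  have hline : ∀ s : ℝ, HasDerivAt (fun s => ((c + s • v, t) : E × P)) (v, 0) s := fun s =>
    (((hasDerivAt_id s).smul_const v).const_add c).prodMk (hasDerivAt_const s t) |>.congr_deriv
      (by simp)
  have := add_deriv_add_half_le_of_le_deriv_deriv
    (g := fun s => F (c + s • v, t)) (g' := fun s => fderiv ℝ F (c + s • v, t) (v, 0))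
    (fun s _ => (hF1 _).hasFDerivAt.comp_hasDerivAt s (hline s))
    (fun s _ => (apply ℝ ℝ ((v, 0) : E × P)).hasFDerivAt.comp_hasDerivAt s
      ((hF2 _).hasFDerivAt.comp_hasDerivAt s (hline s))) ha
  simpa using this

theorem exists_pos_mul_sq_le_of_fstHessian_pos [ProperSpace E] {F : E × P → ℝ} (hF : ContDiff ℝ 2 F) {K : Set P} (hK : IsCompact K) {x : P → E}
    (hx : ContinuousOn x K) (h0 : ∀ t ∈ K, F (x t, t) = 0)
    (h1 : ∀ t ∈ K, ∀ v, fderiv ℝ F (x t, t) (v, 0) = 0)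
    (h2 : ∀ t ∈ K, ∀ v ≠ 0, 0 < fstHessian F (x t, t) v) :
    ∃ ε > 0, ∃ c > 0, ∀ t ∈ K, ∀ y, ‖y - x t‖ ≤ ε → c * ‖y - x t‖ ^ 2 ≤ F (y, t) := by
  set C := (fun t => (x t, t)) '' K
  have hC : IsCompact C := hK.image_of_continuousOn (hx.prodMk continuousOn_id)
  obtain ⟨m, hm, δ, hδ, hbound⟩ := hC.exists_pos_le_on_thickening_prod
      (isCompact_sphere (0:E) 1) (continuous_fstHessian hF) <| by
        rintro _ ⟨t, ht, rfl⟩ u hu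
        exact h2 t ht u (ne_of_mem_sphere hu one_ne_zero)
  refine ⟨δ / 2, half_pos hδ, m / 2, half_pos hm, fun t ht y hy => ?_⟩
  have hnear : ∀ s ∈ Icc (0:ℝ) 1, (x t + s • (y - x t), t) ∈ thickening δ C := by
    intro s hs
    refine mem_thickening_iff.2 ⟨(x t, t), mem_image_of_mem _ ht, ?_⟩
    have : ‖s • (y - x t)‖ ≤ ‖y - x t‖ := by
      rw [norm_smul, Real.norm_of_nonneg hs.1]
      exact mul_le_of_le_one_left (norm_nonneg _) hs.2
    rw [Prod.dist_eq, dist_self, dist_eq_norm, add_sub_cancel_left]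
    exact max_lt (by linarith) hδ
  have := add_fderiv_add_half_le_of_le_fstHessian hF (a := m * ‖y - x t‖ ^ 2)
    fun s hs => mul_sq_norm_le_fstHessian (hbound _ (hnear s hs)) _
  rw [h0 t ht, h1 t ht, add_sub_cancel] at this
  linarith

end PartialDerivatives

theorem gaussian_beam_phase_lower_bound_general (n : ℕ) (T : ℝ)
    (x : ℝ → EuclideanSpace ℝ (Fin n)) (hx : ContinuousOn x (Set.Icc 0 T))
    (Φ : EuclideanSpace ℝ (Fin n) → ℝ → ℂ)
    (hΦ : ContDiff ℝ 2 (fun p : EuclideanSpace ℝ (Fin n) × ℝ => Φ p.1 p.2))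
    (h0 : ∀ t ∈ Set.Icc (0:ℝ) T, (Φ (x t) t).im = 0)
    (h1 : ∀ t ∈ Set.Icc (0:ℝ) T, fderiv ℝ (fun y => (Φ y t).im) (x t) = 0)
    (h2 : ∀ t ∈ Set.Icc (0:ℝ) T, ∀ v : EuclideanSpace ℝ (Fin n), v ≠ 0 →
      0 < fderiv ℝ (fun y => fderiv ℝ (fun z => (Φ z t).im) y v) (x t) v) :
    ∃ ε > (0:ℝ), ∃ c > (0:ℝ), ∀ t ∈ Set.Icc (0:ℝ) T, ∀ y : EuclideanSpace ℝ (Fin n),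
      ‖y - x t‖ ≤ ε → c * ‖y - x t‖ ^ 2 ≤ (Φ y t).im := by
  have hF : ContDiff ℝ 2 fun p : EuclideanSpace ℝ (Fin n) × ℝ => (Φ p.1 p.2).im :=
    Complex.imCLM.contDiff.comp hΦ
  refine exists_pos_mul_sq_le_of_fstHessian_pos hF isCompact_Icc hx h0
    (fun t ht v => ?_) fun t ht v hv => ?_
  · rw [← fderiv_comp_prodMk_left_apply (hF.differentiable (by norm_num) _)]
    simp [h1 t ht]
  · rw [fstHessian, ← fderiv_fderiv_comp_prodMk_left_apply hF]
    exact h2 t ht v hv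

/-- The uniform Gaussian lower bound (3.15) for the imaginary part of
the Gaussian-beam phase (Step 5 of Theorem 3.1): if `Φ` is `C²`, `Im Φ(x(t), t) = 0`,
`∇ₓ Im Φ(x(t), t) = 0` and `∇²ₓ Im Φ(x(t), t)` is positive definite for all
`t ∈ [0, T]` (with `x` continuous on `[0, T]`), then there are `ε, c > 0` with
`Im Φ(y, t) ≥ c|y − x(t)|²` whenever `t ∈ [0, T]` and `|y − x(t)| ≤ ε`. -/
theorem gaussian_beam_phase_lower_bound (n : ℕ) (hn : 1 ≤ n) (T : ℝ) (hT : 0 < T)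
    (x : ℝ → EuclideanSpace ℝ (Fin n)) (hx : ContinuousOn x (Set.Icc 0 T))
    (Φ : EuclideanSpace ℝ (Fin n) → ℝ → ℂ)
    (hΦ : ContDiff ℝ 2 (fun p : EuclideanSpace ℝ (Fin n) × ℝ => Φ p.1 p.2))
    (h0 : ∀ t ∈ Set.Icc (0:ℝ) T, (Φ (x t) t).im = 0)
    (h1 : ∀ t ∈ Set.Icc (0:ℝ) T, fderiv ℝ (fun y => (Φ y t).im) (x t) = 0)
    (h2 : ∀ t ∈ Set.Icc (0:ℝ) T, ∀ v : EuclideanSpace ℝ (Fin n), v ≠ 0 →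
      0 < fderiv ℝ (fun y => fderiv ℝ (fun z => (Φ z t).im) y v) (x t) v) :
    ∃ ε > (0:ℝ), ∃ c > (0:ℝ), ∀ t ∈ Set.Icc (0:ℝ) T, ∀ y : EuclideanSpace ℝ (Fin n),
      ‖y - x t‖ ≤ ε → c * ‖y - x t‖ ^ 2 ≤ (Φ y t).im :=
  gaussian_beam_phase_lower_bound_general n T x hx Φ hΦ h0 h1 h2
end
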